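/- arXiv:1803.06394 — 6 statements merged into one kernel-verified Lean document; each statement's English description precedes it below -/
import Mathlib

section
/- For every positive integer n, the number of partitions of n whose set of even parts has exactly one element equals the difference between the total number of parts in all partitions of n into odd parts and the total number of parts in all partitions of n into distinct parts. -/
/-!
Write `p(m)` for the number of partitions of `m` into odd parts, equal by Euler's theorem to the
number into distinct parts. All three quantities are sums over the pairs `(j, k)` of positive
integers with `j * k ≤ n` of a sign times `p(n - j * k)`, because removing `k` copies of a part
`j` is a bijection onto partitions of `n - j * k`:
* a partition whose only even part is `j`, with multiplicity `k`, is an odd partition of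
  `n - j * k` plus `k` copies of `j`;
* the parts of an odd partition are counted by the pairs (odd `j`, `k ≤` multiplicity of `j`);
* the number `f(n)` of distinct partitions of `n` containing `j` satisfies
  `f(n) + f(n - j) = p(n - j)`, hence `f(n) = ∑ₖ (-1)^(k+1) p(n - j * k)`.
The resulting weight of `(j, k)` in `a(n) - b(n)` is `(-1)^j - (-1)^k`, which is antisymmetric
under `j ↔ k`, so the total vanishes.
-/

open Finset

def mulLePairs (n : ℕ) : Finset (ℕ × ℕ) := {x ∈ Icc 1 n ×ˢ Icc 1 n | x.1 * x.2 ≤ n}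

theorem sum_Icc_one_eq_sum_range {M : Type*} [AddCommMonoid M] (f : ℕ → M) (K : ℕ) :
    ∑ k ∈ Icc 1 K, f k = ∑ i ∈ range K, f (i + 1) := by
  rw [← Ico_add_one_right_eq_Icc, sum_Ico_eq_sum_range]
  simp [add_comm]

theorem sum_mulLePairs {M : Type*} [AddCommMonoid M] (n : ℕ) (F : ℕ → ℕ → M) :
    ∑ x ∈ mulLePairs n, F x.1 x.2 =
      ∑ a ∈ Icc 1 n, ∑ i ∈ range (n / a), F a (i + 1) := by
  rw [mulLePairs, sum_filter, sum_product]
  refine sum_congr rfl fun a ha => ?_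
  have ha : 0 < a := (mem_Icc.1 ha).1
  rw [← sum_filter, ← sum_Icc_one_eq_sum_range]
  congr 1
  ext k
  simp only [mem_filter, mem_Icc, Nat.le_div_iff_mul_le ha]
  constructor
  · rintro ⟨⟨hk, -⟩, h⟩
    exact ⟨hk, by linarith⟩
  · rintro ⟨hk, h⟩
    exact ⟨⟨hk, by nlinarith⟩, by linarith⟩

theorem sum_mulLePairs_swap {M : Type*} [AddCommMonoid M] (n : ℕ) (F : ℕ → ℕ → M) :
    ∑ x ∈ mulLePairs n, F x.1 x.2 = ∑ x ∈ mulLePairs n, F x.2 x.1 :=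
  sum_nbij' Prod.swap Prod.swap (by simp [mulLePairs, mul_comm, and_comm])
    (by simp [mulLePairs, mul_comm, and_comm]) (by simp) (by simp) (by simp)

theorem sum_mulLePairs_sub_mul_eq_zero {R : Type*} [CommRing R] (n : ℕ) (g h : ℕ → R) :
    ∑ x ∈ mulLePairs n, (g x.1 - g x.2) * h (x.1 * x.2) = 0 := by
  simp_rw [sub_mul, sum_sub_distrib, sub_eq_zero]
  refine (sum_mulLePairs_swap n fun a b => g a * h (a * b)).trans (sum_congr rfl fun x _ => ?_)
  rw [mul_comm x.2]

theorem eq_alternating_sum_of_recurrence {R : Type*} [CommRing R] {f g : ℕ → R} {a : ℕ}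
    (ha : 0 < a) (hlt : ∀ n < a, f n = 0) (hstep : ∀ n, a ≤ n → f n + f (n - a) = g (n - a))
    (n : ℕ) : f n = ∑ i ∈ range (n / a), (-1) ^ i * g (n - (i + 1) * a) := by
  induction n using Nat.strong_induction_on with
  | _ n ih =>
  rcases lt_or_ge n a with hn | hn
  · rw [Nat.div_eq_of_lt hn, range_zero, sum_empty, hlt n hn]
  · have hidx (i : ℕ) : n - (i + 1 + 1) * a = n - a - (i + 1) * a := by
      rw [Nat.sub_sub]
      ring_nf
    rw [eq_sub_of_add_eq (hstep n hn), ih (n - a) (Nat.sub_lt (ha.trans_le hn) ha),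
      Nat.div_eq_sub_div ha hn, sum_range_succ']
    simp only [hidx, pow_succ, zero_add, pow_zero, one_mul, mul_neg_one, neg_mul, sum_neg_distrib]
    ring

namespace Nat.Partition

def replicateLeEquiv {n m a k : ℕ} (ha : 0 < a) (h : m + k * a = n) :
    {p : n.Partition // Multiset.replicate k a ≤ p.parts} ≃ m.Partition where
  toFun p := by
    refine ⟨p.1.parts - Multiset.replicate k a,
      fun hi => p.1.parts_pos (Multiset.mem_of_le (Multiset.sub_le_self _ _) hi), ?_⟩
    have := congrArg Multiset.sum (tsub_add_cancel_of_le p.2)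
    rw [Multiset.sum_add, p.1.parts_sum, Multiset.sum_replicate, smul_eq_mul] at this
    omega
  invFun q := by
    refine ⟨⟨q.parts + Multiset.replicate k a, fun hi => ?_, ?_⟩, Multiset.le_add_left _ _⟩
    · rcases Multiset.mem_add.1 hi with hi | hi
      · exact q.parts_pos hi
      · rwa [Multiset.eq_of_mem_replicate hi]
    · rw [Multiset.sum_add, q.parts_sum, Multiset.sum_replicate, smul_eq_mul]
      omega
  left_inv p := Subtype.ext <| Partition.ext <| tsub_add_cancel_of_le p.2
  right_inv q := Partition.ext <| add_tsub_cancel_right _ _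

theorem card_filter_eq_card_filter_add_replicate {n m a k : ℕ} (ha : 0 < a) (h : m + k * a = n)
    (P : Multiset ℕ → Prop) [DecidablePred P]
    (hP : ∀ s, P s → Multiset.replicate k a ≤ s) :
    #{p : n.Partition | P p.parts} =
      #{q : m.Partition | P (q.parts + Multiset.replicate k a)} := by
  let e := replicateLeEquiv ha h
  refine card_bij' (fun p hp => e ⟨p, hP _ (mem_filter.1 hp).2⟩) (fun q _ => (e.symm q).1)
    (fun p hp => ?_) (fun q hq => ?_) (fun p _ => ?_) (fun q _ => ?_)
  · simpa [e, replicateLeEquiv, tsub_add_cancel_of_le (hP _ (mem_filter.1 hp).2)] using hp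
  · simpa [e, replicateLeEquiv] using hq
  · simp
  · simp

theorem count_mul_le {n : ℕ} (p : n.Partition) (a : ℕ) : p.parts.count a * a ≤ n := by
  obtain ⟨s, hs⟩ := Multiset.le_iff_exists_add.1
    (Multiset.le_count_iff_replicate_le.1 (le_refl (p.parts.count a)))
  have := congrArg Multiset.sum hs
  rw [Multiset.sum_add, p.parts_sum, Multiset.sum_replicate, smul_eq_mul] at this
  omega

theorem card_parts_eq_card_filter_mulLePairs {n : ℕ} (p : n.Partition) :
    Multiset.card p.parts = #{x ∈ mulLePairs n | x.2 ≤ p.parts.count x.1} := by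
  have hcount (a : ℕ) (ha : 0 < a) :
      ∑ i ∈ range (n / a), (if i + 1 ≤ p.parts.count a then 1 else 0) = p.parts.count a := by
    have hle : p.parts.count a ≤ n / a := (Nat.le_div_iff_mul_le ha).2 (p.count_mul_le a)
    have hrange : {i ∈ range (n / a) | i + 1 ≤ p.parts.count a} = range (p.parts.count a) := by
      ext i
      simp only [mem_filter, mem_range]
      omega
    rw [sum_boole, hrange, card_range, Nat.cast_id]
  rw [card_filter, sum_mulLePairs n fun a k => if k ≤ p.parts.count a then 1 else 0,
    sum_congr rfl fun a ha => hcount a (mem_Icc.1 ha).1, ← Multiset.toFinset_sum_count_eq]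
  refine sum_subset (fun a ha => ?_) (fun a _ ha => Multiset.count_eq_zero.2 ?_)
  · rw [Multiset.mem_toFinset] at ha
    exact mem_Icc.2 ⟨p.parts_pos ha, p.le_of_mem_parts ha⟩
  · rwa [← Multiset.mem_toFinset]

theorem sum_card_parts_eq_sum_mulLePairs {n : ℕ} (s : Finset n.Partition) :
    ∑ p ∈ s, Multiset.card p.parts =
      ∑ x ∈ mulLePairs n, #{p ∈ s | x.2 ≤ p.parts.count x.1} := by
  simp_rw [card_parts_eq_card_filter_mulLePairs]
  exact sum_card_bipartiteAbove_eq_sum_card_bipartiteBelow _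

theorem card_odds_filter_le_count {n a k : ℕ} (ha : 0 < a) (hk : 0 < k) (h : k * a ≤ n) :
    #{p ∈ odds n | k ≤ p.parts.count a} = if Even a then 0 else #(odds (n - k * a)) := by
  split_ifs with hev
  · refine Finset.card_eq_zero.2 (filter_eq_empty_iff.2 fun p hp hka => ?_)
    exact (mem_filter.1 hp).2 a (Multiset.count_pos.1 (hk.trans_le hka)) hev
  · rw [odds, restricted, filter_filter, card_filter_eq_card_filter_add_replicate ha
      (Nat.sub_add_cancel h) (fun s => (∀ i ∈ s, ¬Even i) ∧ k ≤ s.count a)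
      fun s hs => Multiset.le_count_iff_replicate_le.1 hs.2]
    congr 1
    ext q
    simp [odds, restricted, Multiset.count_add, or_imp, forall_and, Multiset.mem_replicate,
      Nat.not_even_iff_odd.1 hev]

theorem sum_card_parts_odds (n : ℕ) :
    ∑ p ∈ odds n, Multiset.card p.parts =
      ∑ x ∈ mulLePairs n, if Even x.1 then 0 else #(odds (n - x.1 * x.2)) := by
  rw [sum_card_parts_eq_sum_mulLePairs]
  refine sum_congr rfl fun x hx => ?_
  simp only [mulLePairs, mem_filter, mem_product, mem_Icc] at hx
  rw [card_odds_filter_le_count hx.1.1.1 hx.1.2.1 (by linarith), mul_comm]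

def evenParts {n : ℕ} (p : n.Partition) : Finset ℕ := {i ∈ p.parts.toFinset | Even i}

theorem card_filter_evenParts_eq_singleton {n a k : ℕ} (ha : Even a) (ha0 : 0 < a) (hk : 0 < k)
    (h : k * a ≤ n) :
    #{p : n.Partition | p.evenParts = {a} ∧ p.parts.count a = k} = #(odds (n - k * a)) := by
  refine (card_filter_eq_card_filter_add_replicate ha0 (Nat.sub_add_cancel h)
    (fun s => {i ∈ s.toFinset | Even i} = {a} ∧ s.count a = k)
    fun s hs => Multiset.le_count_iff_replicate_le.1 hs.2.ge).trans ?_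
  congr 1
  ext q
  simp only [mem_filter, mem_univ, true_and, odds, restricted, Multiset.count_add,
    Multiset.count_replicate_self, Nat.add_eq_right, Multiset.count_eq_zero]
  constructor
  · rintro ⟨hset, haq⟩ i hi hev
    have : i ∈ {i ∈ (q.parts + Multiset.replicate k a).toFinset | Even i} := by simp [hi, hev]
    rw [hset, mem_singleton] at this
    exact haq (this ▸ hi)
  · intro hodd
    refine ⟨?_, fun haq => hodd a haq ha⟩
    ext i
    simp only [mem_filter, Multiset.mem_toFinset, Multiset.mem_add, Multiset.mem_replicate,
      mem_singleton]
    constructor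
    · rintro ⟨hi | ⟨-, rfl⟩, hev⟩
      · exact absurd hev (hodd i hi)
      · rfl
    · rintro rfl
      exact ⟨Or.inr ⟨hk.ne', rfl⟩, ha⟩

theorem card_filter_card_evenParts_eq_one (n : ℕ) :
    #{p : n.Partition | #p.evenParts = 1} =
      ∑ x ∈ mulLePairs n, if Even x.1 then #(odds (n - x.1 * x.2)) else 0 := by
  let fiber (x : ℕ × ℕ) : Finset n.Partition :=
    {p | p.evenParts = {x.1} ∧ p.parts.count x.1 = x.2}
  have hunion : ({p | #p.evenParts = 1} : Finset n.Partition) = (mulLePairs n).biUnion fiber := by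
    ext p
    simp only [fiber, mem_filter, mem_univ, true_and, mem_biUnion, card_eq_one]
    constructor
    · rintro ⟨a, ha⟩
      have hmem : a ∈ p.evenParts := ha ▸ mem_singleton_self a
      rw [evenParts, mem_filter, Multiset.mem_toFinset] at hmem
      refine ⟨(a, p.parts.count a), ?_, ha, rfl⟩
      have hpos := p.parts_pos hmem.1
      have hcount := Multiset.count_pos.2 hmem.1
      have hle := p.count_mul_le a
      simp only [mulLePairs, mem_filter, mem_product, mem_Icc]
      refine ⟨⟨⟨hpos, ?_⟩, hcount, ?_⟩, ?_⟩ <;> nlinarith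
    · rintro ⟨x, -, hx, -⟩
      exact ⟨x.1, hx⟩
  have hdisj : (mulLePairs n : Set (ℕ × ℕ)).PairwiseDisjoint fiber := by
    intro x _ y _ hxy
    refine disjoint_left.2 fun p hpx hpy => hxy ?_
    simp only [fiber, mem_filter, mem_univ, true_and] at hpx hpy
    have h1 : x.1 = y.1 := singleton_injective (hpx.1.symm.trans hpy.1)
    exact Prod.ext h1 (hpx.2.symm.trans (h1 ▸ hpy.2))
  rw [hunion, card_biUnion hdisj]
  refine sum_congr rfl fun x hx => ?_
  simp only [mulLePairs, mem_filter, mem_product, mem_Icc] at hx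
  split_ifs with hev
  · rw [card_filter_evenParts_eq_singleton hev hx.1.1.1 hx.1.2.1 (by linarith), mul_comm]
  · refine Finset.card_eq_zero.2 (filter_eq_empty_iff.2 fun p _ hp => hev ?_)
    have : x.1 ∈ p.evenParts := hp.1 ▸ mem_singleton_self _
    exact (mem_filter.1 this).2

theorem card_distincts_filter_mem_add {n a : ℕ} (ha : 0 < a) (h : a ≤ n) :
    #{p ∈ distincts n | a ∈ p.parts} + #{p ∈ distincts (n - a) | a ∈ p.parts} =
      #(distincts (n - a)) := by
  have hremove := card_filter_eq_card_filter_add_replicate (n := n) (m := n - a) (k := 1) ha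
    (by omega) (fun s => s.Nodup ∧ a ∈ s) fun s hs => by simpa using hs.2
  simp only [Multiset.replicate_one] at hremove
  rw [distincts, filter_filter, hremove, add_comm,
    ← card_filter_add_card_filter_not (s := distincts (n - a)) (a ∈ ·.parts)]
  congr 1
  refine congrArg card (Finset.ext fun q => ?_)
  simp [distincts, add_comm q.parts, and_comm]

theorem sum_card_parts_distincts (n : ℕ) :
    ∑ p ∈ distincts n, (Multiset.card p.parts : ℤ) =
      ∑ x ∈ mulLePairs n, (-1) ^ (x.2 + 1) * (#(distincts (n - x.1 * x.2)) : ℤ) := by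
  have hcard (p : n.Partition) (hp : p ∈ distincts n) :
      Multiset.card p.parts = #{a ∈ Icc 1 n | a ∈ p.parts} := by
    rw [← Multiset.toFinset_card_of_nodup (mem_filter.1 hp).2]
    congr 1
    ext a
    simpa using fun ha => ⟨p.parts_pos ha, p.le_of_mem_parts ha⟩
  have hdouble : ∑ p ∈ distincts n, Multiset.card p.parts =
      ∑ a ∈ Icc 1 n, #{p ∈ distincts n | a ∈ p.parts} := by
    rw [sum_congr rfl hcard]
    exact sum_card_bipartiteAbove_eq_sum_card_bipartiteBelow _
  calc ∑ p ∈ distincts n, (Multiset.card p.parts : ℤ)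
      = ∑ a ∈ Icc 1 n, (#{p ∈ distincts n | a ∈ p.parts} : ℤ) := by exact_mod_cast hdouble
    _ = ∑ a ∈ Icc 1 n, ∑ i ∈ range (n / a),
          (-1) ^ i * (#(distincts (n - (i + 1) * a)) : ℤ) := by
      refine sum_congr rfl fun a ha => eq_alternating_sum_of_recurrence
        (f := fun m => (#{p ∈ distincts m | a ∈ p.parts} : ℤ))
        (g := fun m => (#(distincts m) : ℤ))
        (mem_Icc.1 ha).1 (fun m hm => ?_) (fun m hm => ?_) n
      · exact_mod_cast Finset.card_eq_zero.2 <|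
          filter_eq_empty_iff.2 fun (p : m.Partition) _ hp => (p.le_of_mem_parts hp).not_gt hm
      · exact_mod_cast card_distincts_filter_mem_add (mem_Icc.1 ha).1 hm
    _ = _ := by
      rw [sum_mulLePairs n fun a k => (-1) ^ (k + 1) * (#(distincts (n - a * k)) : ℤ)]
      refine sum_congr rfl fun a _ => sum_congr rfl fun i _ => ?_
      rw [mul_comm a]
      ring

end Nat.Partition

open Nat.Partition

theorem andrews_a_eq_b_general (n : ℕ) :
    ((Finset.univ.filter (fun P : n.Partition =>
        (P.parts.toFinset.filter (fun p => Even p)).card = 1)).card : ℤ) =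
      (∑ P ∈ Nat.Partition.odds n, (Multiset.card P.parts : ℤ)) -
        ∑ P ∈ Nat.Partition.distincts n, (Multiset.card P.parts : ℤ) := by
  have hodds : ∑ p ∈ odds n, (Multiset.card p.parts : ℤ) =
      ∑ x ∈ mulLePairs n, if Even x.1 then 0 else (#(odds (n - x.1 * x.2)) : ℤ) := by
    exact_mod_cast sum_card_parts_odds n
  change ((#{p : n.Partition | #p.evenParts = 1} : ℕ) : ℤ) = _
  rw [card_filter_card_evenParts_eq_one, hodds, sum_card_parts_distincts]
  refine sub_eq_zero.1 (Eq.trans ?_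
    (sum_mulLePairs_sub_mul_eq_zero n (fun j => (-1 : ℤ) ^ j) fun m => #(odds (n - m))))
  push_cast
  rw [← sum_sub_distrib, ← sum_sub_distrib]
  refine sum_congr rfl fun x _ => ?_
  rw [← card_odds_eq_card_distincts]
  by_cases h : Even x.1
  · rw [if_pos h, if_pos h, h.neg_one_pow]
    ring
  · rw [if_neg h, if_neg h, (Nat.not_even_iff_odd.1 h).neg_one_pow]
    ring

theorem andrews_a_eq_b (n : ℕ) (hn : 0 < n) :
    ((Finset.univ.filter (fun P : n.Partition =>
        (P.parts.toFinset.filter (fun p => Even p)).card = 1)).card : ℤ) =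
      (∑ P ∈ Nat.Partition.odds n, (Multiset.card P.parts : ℤ)) -
        ∑ P ∈ Nat.Partition.distincts n, (Multiset.card P.parts : ℤ) :=
  andrews_a_eq_b_general n
end

section
/- For every positive integer n, the number of partitions of n in which exactly one part value appears exactly three times while all other part values appear exactly once, equals the difference between the total number of parts in all partitions of n into distinct parts and the total number of distinct part values appearing in all partitions of n into odd parts. -/
/-!
Write `d m` for the number of partitions of `m` into distinct parts, and `C_k m`, `E_k m` for
those that contain, resp. avoid, the part `k`. Adding a part `k` gives `C_k (m + k) = E_k m`,
and `d m = C_k m + E_k m`; unwinding this three times,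
`C_k n = d (n - k) - d (n - 2k) + E_k (n - 3k)` (terms with negative argument being zero).
Adding three copies of `k` identifies `E_k (n - 3k)` with the partitions counted by `c1 n`
whose tripled part is `k`. Summing over `k`, `∑ C_k n` is the total number of parts of distinct
partitions of `n`, while `∑ (d (n - k) - d (n - 2k)) = ∑_{k odd} d (n - k)`, which by Euler's
theorem counts the pairs (odd partition of `n`, part value of it).
-/

open Finset

theorem Finset.sum_Icc_sub_eq_sum_odd_add_sum_two_mul {M : Type*} [AddCommMonoid M] (n : ℕ)
    (f : ℕ → M) :
    ∑ k ∈ Icc 1 n, f (n - k) =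
      ∑ k ∈ Icc 1 n, (if Odd k then f (n - k) else 0) +
        ∑ k ∈ Icc 1 n, if 2 * k ≤ n then f (n - 2 * k) else 0 := by
  rw [← sum_filter, ← sum_filter, ← sum_filter_add_sum_filter_not _ Odd]
  congr 1
  refine sum_nbij' (fun v => v / 2) (fun k => 2 * k) ?_ ?_ ?_ ?_ ?_ <;>
    simp only [mem_filter, mem_Icc, Nat.not_odd_iff_even, Nat.even_iff] <;> intro v hv
  all_goals first | omega | rw [Nat.two_mul_div_two_of_even (Nat.even_iff.mpr hv.2)]

theorem Multiset.sum_sub_replicate_add {α : Type*} [DecidableEq α] [AddCommMonoid α]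
    {s : Multiset α} {a : α} {j : ℕ} (h : j ≤ s.count a) :
    (s - replicate j a).sum + j • a = s.sum := by
  simpa using congrArg sum (tsub_add_cancel_of_le (le_count_iff_replicate_le.mp h))

theorem Multiset.count_add_replicate_self_eq_and_iff {α : Type*} [DecidableEq α]
    (s : Multiset α) (a : α) (j : ℕ) :
    ((s + replicate j a).count a = j ∧
        ∀ i ∈ s + replicate j a, i ≠ a → (s + replicate j a).count i = 1) ↔
      s.Nodup ∧ a ∉ s := by
  have hcount (i : α) (hi : i ≠ a) : (s + replicate j a).count i = s.count i := by
    rw [count_add, count_replicate, if_neg (Ne.symm hi), add_zero]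
  rw [count_add, count_replicate_self, Nat.add_eq_right, count_eq_zero, nodup_iff_count_eq_one]
  constructor
  · rintro ⟨has, h⟩
    refine ⟨fun i hi => ?_, has⟩
    have hia : i ≠ a := by rintro rfl; exact has hi
    rw [← hcount i hia]
    exact h i (mem_add.mpr (.inl hi)) hia
  · rintro ⟨hs, has⟩
    refine ⟨has, fun i hi hia => ?_⟩
    rw [hcount i hia]
    exact hs i ((mem_add.mp hi).resolve_right fun h => hia (eq_of_mem_replicate h))

namespace Nat.Partition

theorem card_filter_le_count_and {n k j : ℕ} (hk : 0 < k) {p q : Multiset ℕ → Prop}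
    [DecidablePred p] [DecidablePred q]
    (hpq : ∀ Q : Multiset ℕ, p (Q + Multiset.replicate j k) ↔ q Q) :
    #{P : n.Partition | j ≤ P.parts.count k ∧ p P.parts} =
      if j * k ≤ n then #{Q : (n - j * k).Partition | q Q.parts} else 0 := by
  split_ifs with hjk
  · obtain ⟨m, rfl⟩ : ∃ m, n = m + j * k := ⟨n - j * k, by omega⟩
    rw [Nat.add_sub_cancel]
    refine card_bij'
      (fun P hP => ⟨P.parts - Multiset.replicate j k,
        fun hi => P.parts_pos (Multiset.mem_of_le (Multiset.sub_le_self _ _) hi), by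
          have := Multiset.sum_sub_replicate_add (mem_filter.mp hP).2.1
          rw [P.parts_sum, smul_eq_mul] at this
          omega⟩)
      (fun Q _ => ⟨Q.parts + Multiset.replicate j k, fun hi => ?_, by simp [Q.parts_sum]⟩)
      ?_ ?_ ?_ ?_
    · rcases Multiset.mem_add.mp hi with hi | hi
      · exact Q.parts_pos hi
      · rwa [Multiset.eq_of_mem_replicate hi]
    · intro P hP
      simp only [mem_filter, mem_univ, true_and] at hP ⊢
      rw [← hpq, tsub_add_cancel_of_le (Multiset.le_count_iff_replicate_le.mp hP.1)]
      exact hP.2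
    · intro Q hQ
      simp only [mem_filter, mem_univ, true_and] at hQ ⊢
      exact ⟨by simp, (hpq _).mpr hQ⟩
    · intro P hP
      exact Nat.Partition.ext
        (tsub_add_cancel_of_le (Multiset.le_count_iff_replicate_le.mp (mem_filter.mp hP).2.1))
    · intro Q _
      exact Nat.Partition.ext (add_tsub_cancel_right _ _)
  · refine Finset.card_eq_zero.mpr (filter_eq_empty_iff.mpr fun P _ hP => hjk ?_)
    have := Multiset.sum_sub_replicate_add hP.1
    rw [P.parts_sum, smul_eq_mul] at this
    omega

theorem card_distincts_filter_mem {n k : ℕ} (hk : 0 < k) :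
    #{P ∈ distincts n | k ∈ P.parts} =
      if k ≤ n then #{Q ∈ distincts (n - k) | k ∉ Q.parts} else 0 := by
  have hpq (Q : Multiset ℕ) : (Q + Multiset.replicate 1 k).Nodup ↔ Q.Nodup ∧ k ∉ Q := by
    rw [Multiset.replicate_one, add_comm, Multiset.singleton_add, Multiset.nodup_cons, and_comm]
  have := card_filter_le_count_and hk hpq (n := n)
  rw [one_mul] at this
  simpa only [distincts, filter_filter, Multiset.one_le_count_iff_mem, and_comm] using this

theorem card_odds_filter_mem (n k : ℕ) :
    #{P ∈ odds n | k ∈ P.parts} = if Odd k ∧ k ≤ n then #(odds (n - k)) else 0 := by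
  by_cases hk : Odd k
  · have hpq (Q : Multiset ℕ) :
        (∀ i ∈ Q + Multiset.replicate 1 k, ¬Even i) ↔ ∀ i ∈ Q, ¬Even i := by
      simp [or_imp, forall_and, hk]
    have := card_filter_le_count_and hk.pos (p := fun s => ∀ i ∈ s, ¬Even i) hpq (n := n)
    rw [one_mul] at this
    simpa only [odds, restricted, filter_filter, Multiset.one_le_count_iff_mem, and_comm,
      hk, true_and] using this
  · rw [if_neg (fun h => hk h.1), Finset.card_eq_zero, filter_eq_empty_iff]
    intro P hP hkP
    exact hk (Nat.not_even_iff_odd.mp ((mem_filter.mp hP).2 k hkP))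

def distinctsWithTriple (n k : ℕ) : Finset n.Partition :=
  {P | P.parts.count k = 3 ∧ ∀ i ∈ P.parts, i ≠ k → P.parts.count i = 1}

theorem card_distinctsWithTriple {n k : ℕ} (hk : 0 < k) :
    #(distinctsWithTriple n k) =
      if 3 * k ≤ n then #{Q ∈ distincts (n - 3 * k) | k ∉ Q.parts} else 0 := by
  have := card_filter_le_count_and (n := n) hk
    (p := fun s => s.count k = 3 ∧ ∀ i ∈ s, i ≠ k → s.count i = 1)
    (fun Q => Multiset.count_add_replicate_self_eq_and_iff Q k 3)
  simp only [distinctsWithTriple, distincts, filter_filter]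
  rw [← this]
  congr 1
  exact filter_congr fun P _ => by constructor <;> intro h <;> simp_all

theorem card_distincts_filter_mem_add_s2 {n k : ℕ} (hk : 0 < k) (hkn : k ≤ n) :
    #{P ∈ distincts n | k ∈ P.parts} + (if 2 * k ≤ n then #(distincts (n - 2 * k)) else 0) =
      #(distincts (n - k)) +
        if 3 * k ≤ n then #{Q ∈ distincts (n - 3 * k) | k ∉ Q.parts} else 0 := by
  have h₀ := card_distincts_filter_mem hk (n := n)
  have h₁ := card_distincts_filter_mem hk (n := n - k)
  have h₂ := card_distincts_filter_mem hk (n := n - 2 * k)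
  have s₁ := card_filter_add_card_filter_not (s := distincts (n - k)) (fun P => k ∈ P.parts)
  have s₂ := card_filter_add_card_filter_not (s := distincts (n - 2 * k)) (fun P => k ∈ P.parts)
  rw [show n - k - k = n - 2 * k by omega] at h₁
  rw [show n - 2 * k - k = n - 3 * k by omega] at h₂
  split_ifs at * <;> omega

theorem sum_card_toFinset_parts (n : ℕ) (s : Finset n.Partition) :
    ∑ P ∈ s, #P.parts.toFinset = ∑ k ∈ Icc 1 n, #{P ∈ s | k ∈ P.parts} := by
  have h (P : n.Partition) : P.parts.toFinset = {k ∈ Icc 1 n | k ∈ P.parts} := by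
    ext k
    simp only [Multiset.mem_toFinset, mem_filter, mem_Icc, iff_and_self]
    exact fun hk => ⟨P.parts_pos hk, le_of_mem_parts hk⟩
  simp_rw [h]
  exact sum_card_bipartiteAbove_eq_sum_card_bipartiteBelow
    (r := fun (P : n.Partition) k => k ∈ P.parts)

theorem card_filter_exists_count_eq_three (n : ℕ) :
    #{P : n.Partition | ∃ p ∈ P.parts.toFinset, P.parts.count p = 3 ∧
        ∀ q ∈ P.parts.toFinset, q ≠ p → P.parts.count q = 1} =
      ∑ k ∈ Icc 1 n, #(distinctsWithTriple n k) := by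
  have hdisj : (Icc 1 n : Set ℕ).PairwiseDisjoint (distinctsWithTriple n) := by
    intro k _ k' _ hkk'
    refine disjoint_left.mpr fun P hk hk' => ?_
    simp only [distinctsWithTriple, mem_filter, mem_univ, true_and] at hk hk'
    have hk'P : k' ∈ P.parts := Multiset.count_pos.mp (by omega)
    have := hk.2 k' hk'P (Ne.symm hkk')
    omega
  rw [← card_biUnion hdisj]
  congr 1
  ext P
  simp only [distinctsWithTriple, mem_filter, mem_univ, true_and, mem_biUnion, mem_Icc,
    Multiset.mem_toFinset]
  constructor
  · rintro ⟨k, hk, h3, h1⟩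
    exact ⟨k, ⟨P.parts_pos hk, le_of_mem_parts hk⟩, h3, h1⟩
  · rintro ⟨k, -, h3, h1⟩
    exact ⟨k, Multiset.count_pos.mp (by omega), h3, h1⟩

end Nat.Partition

open Nat.Partition in
theorem andrews_c1_eq_b1_general (n : ℕ) :
    ((Finset.univ.filter (fun P : n.Partition =>
        ∃ p ∈ P.parts.toFinset, P.parts.count p = 3 ∧
          ∀ q ∈ P.parts.toFinset, q ≠ p → P.parts.count q = 1)).card : ℤ) =
      (∑ P ∈ Nat.Partition.distincts n, (Multiset.card P.parts : ℤ)) -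
        ∑ P ∈ Nat.Partition.odds n, (P.parts.toFinset.card : ℤ) := by
  have hc1 := card_filter_exists_count_eq_three n
  rw [sum_congr rfl fun k hk => card_distinctsWithTriple (mem_Icc.mp hk).1] at hc1
  have hdistincts : ∑ P ∈ distincts n, Multiset.card P.parts =
      ∑ k ∈ Icc 1 n, #{P ∈ distincts n | k ∈ P.parts} := by
    rw [← sum_card_toFinset_parts]
    exact sum_congr rfl fun P hP =>
      (Multiset.toFinset_card_of_nodup (mem_filter.mp hP).2).symm
  have hodds : ∑ P ∈ odds n, #P.parts.toFinset =
      ∑ k ∈ Icc 1 n, if Odd k then #(distincts (n - k)) else 0 := by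
    rw [sum_card_toFinset_parts]
    refine sum_congr rfl fun k hk => ?_
    rw [card_odds_filter_mem, card_odds_eq_card_distincts]
    simp [(mem_Icc.mp hk).2]
  have hsplit := sum_congr rfl fun k (hk : k ∈ Icc 1 n) =>
    card_distincts_filter_mem_add_s2 (mem_Icc.mp hk).1 (mem_Icc.mp hk).2 (n := n)
  have hparity := sum_Icc_sub_eq_sum_odd_add_sum_two_mul n fun m => #(distincts m)
  rw [sum_add_distrib, sum_add_distrib] at hsplit
  rw [eq_sub_iff_add_eq, ← Nat.cast_sum, ← Nat.cast_sum, hc1, hodds, hdistincts]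
  omega

theorem andrews_c1_eq_b1 (n : ℕ) (hn : 0 < n) :
    ((Finset.univ.filter (fun P : n.Partition =>
        ∃ p ∈ P.parts.toFinset, P.parts.count p = 3 ∧
          ∀ q ∈ P.parts.toFinset, q ≠ p → P.parts.count q = 1)).card : ℤ) =
      (∑ P ∈ Nat.Partition.distincts n, (Multiset.card P.parts : ℤ)) -
        ∑ P ∈ Nat.Partition.odds n, (P.parts.toFinset.card : ℤ) :=
  andrews_c1_eq_b1_general n
end

section
/- For every positive integer n, the total number of parts over all partitions of n into odd parts minus the total number of parts over all partitions of n into distinct parts equals the sum over all partitions μ of n into distinct parts of wt(μ), where wt(μ) = Σ_j (2^{k_j} − 1) when the parts of μ are written as μ_j = 2^{k_j}·m_j with m_j odd. -/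
open Finset

/-- The weight of a multiset of parts: each part `p = 2^k * m` with `m` odd
contributes `2^k - 1`, where `k = p.factorization 2`. -/
def partitionWeight (s : Multiset ℕ) : ℕ :=
  (s.map (fun p => 2 ^ (p.factorization 2) - 1)).sum

/-!
Glaisher's map sends a partition into distinct parts to a partition into odd parts by splitting
each part `2 ^ k * m` (`m` odd) into `2 ^ k` copies of `m`. It is injective, since the
multiplicity `∑ 2 ^ k` of `m` in the image has the exponents `k` as its binary digits, and hence
bijective by Euler's theorem `#(odds n) = #(distincts n)`. Along it, a part `2 ^ k * m` accounts
for `2 ^ k` odd parts against one distinct part, a surplus of exactly its weight `2 ^ k - 1`.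
-/

lemma Nat.eq_of_factorization_eq_of_ordCompl_eq {a b r : ℕ}
    (h : a.factorization r = b.factorization r) (h' : ordCompl[r] a = ordCompl[r] b) : a = b := by
  rw [← Nat.ordProj_mul_ordCompl_eq_self a r, ← Nat.ordProj_mul_ordCompl_eq_self b r, h', h]

namespace Nat.Partition

open Multiset

def glaisherParts (s : Multiset ℕ) : Multiset ℕ :=
  s.bind fun p => replicate (ordProj[2] p) (ordCompl[2] p)

lemma card_glaisherParts (s : Multiset ℕ) :
    card (glaisherParts s) = (s.map fun p => ordProj[2] p).sum := by
  simp [glaisherParts, card_bind]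

lemma sum_glaisherParts (s : Multiset ℕ) : (glaisherParts s).sum = s.sum := by
  simp [glaisherParts, sum_bind, Nat.ordProj_mul_ordCompl_eq_self]

lemma count_glaisherParts (S : Finset ℕ) (m : ℕ) :
    (glaisherParts S.val).count m = ∑ p ∈ S with ordCompl[2] p = m, ordProj[2] p := by
  rw [Finset.sum_filter, glaisherParts, count_bind]
  simp only [count_replicate]
  rfl

lemma mem_iff_mem_bitIndices_count_glaisherParts (S : Finset ℕ) (a : ℕ) :
    a ∈ S ↔ a.factorization 2 ∈ ((glaisherParts S.val).count (ordCompl[2] a)).bitIndices := by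
  have hinj : Set.InjOn (fun p : ℕ => p.factorization 2)
      ↑(S.filter fun p => ordCompl[2] p = ordCompl[2] a) := by
    intro p hp q hq hpq
    rw [coe_filter] at hp hq
    exact Nat.eq_of_factorization_eq_of_ordCompl_eq hpq (hp.2.trans hq.2.symm)
  rw [count_glaisherParts, ← Finset.sum_image hinj, ← List.mem_toFinset,
    Finset.toFinset_bitIndices_sum_two_pow]
  constructor
  · intro ha
    exact Finset.mem_image_of_mem _ (Finset.mem_filter.2 ⟨ha, rfl⟩)
  · intro ha
    obtain ⟨p, hp, hpa⟩ := Finset.mem_image.1 ha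
    obtain ⟨hpS, hpo⟩ := Finset.mem_filter.1 hp
    rwa [← Nat.eq_of_factorization_eq_of_ordCompl_eq hpa hpo]

lemma glaisherParts_val_injective : Function.Injective fun S : Finset ℕ => glaisherParts S.val :=
  fun S T h => Finset.ext fun a => by
    rw [mem_iff_mem_bitIndices_count_glaisherParts, mem_iff_mem_bitIndices_count_glaisherParts T,
      show glaisherParts S.val = glaisherParts T.val from h]

lemma mem_glaisherParts {s : Multiset ℕ} {m : ℕ} :
    m ∈ glaisherParts s ↔ ∃ p ∈ s, ordCompl[2] p = m := by
  simp only [glaisherParts, mem_bind, mem_replicate, pow_ne_zero _ two_ne_zero, ne_eq,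
    not_false_eq_true, true_and, eq_comm]

def glaisher {n : ℕ} (P : n.Partition) : n.Partition where
  parts := glaisherParts P.parts
  parts_pos hm := by
    obtain ⟨p, hp, rfl⟩ := mem_glaisherParts.1 hm
    exact Nat.ordCompl_pos 2 (P.parts_pos hp).ne'
  parts_sum := by rw [sum_glaisherParts, P.parts_sum]

lemma glaisher_mem_odds {n : ℕ} (P : n.Partition) : glaisher P ∈ odds n := by
  simp only [odds, restricted, Finset.mem_filter, Finset.mem_univ, true_and]
  intro m hm
  obtain ⟨p, hp, rfl⟩ := mem_glaisherParts.1 hm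
  rw [even_iff_two_dvd]
  exact Nat.not_dvd_ordCompl Nat.prime_two (P.parts_pos hp).ne'

lemma glaisher_injOn_distincts {n : ℕ} : Set.InjOn glaisher (distincts n : Set n.Partition) := by
  intro P hP Q hQ h
  simp only [distincts, coe_filter, Finset.mem_univ, true_and, Set.mem_ofPred_eq] at hP hQ
  ext1
  exact congrArg Finset.val (glaisherParts_val_injective (a₁ := ⟨P.parts, hP⟩) (a₂ := ⟨Q.parts, hQ⟩)
    (congrArg Nat.Partition.parts h))

lemma image_glaisher_distincts {n : ℕ} : (distincts n).image glaisher = odds n :=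
  Finset.eq_of_subset_of_card_le (Finset.image_subset_iff.2 fun P _ => glaisher_mem_odds P)
    (by rw [Finset.card_image_of_injOn glaisher_injOn_distincts, card_odds_eq_card_distincts])

lemma sum_card_parts_odds_s3 (n : ℕ) :
    ∑ P ∈ odds n, card P.parts = ∑ P ∈ distincts n, (P.parts.map fun p => ordProj[2] p).sum := by
  rw [← image_glaisher_distincts, Finset.sum_image glaisher_injOn_distincts]
  exact Finset.sum_congr rfl fun P _ => card_glaisherParts P.parts

end Nat.Partition

lemma partitionWeight_add_card (s : Multiset ℕ) :
    partitionWeight s + Multiset.card s = (s.map fun p => ordProj[2] p).sum := by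
  calc partitionWeight s + Multiset.card s
      = (s.map fun p => 2 ^ p.factorization 2 - 1 + 1).sum := by
        simp [partitionWeight, Multiset.sum_map_add]
    _ = (s.map fun p => ordProj[2] p).sum := by
        simp_rw [Nat.sub_add_cancel Nat.one_le_two_pow]

theorem b_eq_sum_of_weights_general (n : ℕ) :
    (∑ P ∈ Nat.Partition.odds n, (Multiset.card P.parts : ℤ)) -
        ∑ P ∈ Nat.Partition.distincts n, (Multiset.card P.parts : ℤ) =
      ∑ P ∈ Nat.Partition.distincts n, (partitionWeight P.parts : ℤ) := by
  have h : ∑ P ∈ Nat.Partition.odds n, Multiset.card P.parts =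
      ∑ P ∈ Nat.Partition.distincts n, (partitionWeight P.parts + Multiset.card P.parts) := by
    simp_rw [partitionWeight_add_card]
    exact Nat.Partition.sum_card_parts_odds_s3 n
  rw [sub_eq_iff_eq_add, ← Finset.sum_add_distrib]
  exact_mod_cast h

theorem b_eq_sum_of_weights (n : ℕ) (hn : 0 < n) :
    (∑ P ∈ Nat.Partition.odds n, (Multiset.card P.parts : ℤ)) -
        ∑ P ∈ Nat.Partition.distincts n, (Multiset.card P.parts : ℤ) =
      ∑ P ∈ Nat.Partition.distincts n, (partitionWeight P.parts : ℤ) :=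
  b_eq_sum_of_weights_general n
end

section
/- For every positive integer n, the number of partitions of n into distinct parts except that exactly one part value appears exactly three times equals the number of partitions λ of n such that: λ has exactly one even part value 2^k·m (k ≥ 1, m odd) which appears with odd multiplicity, and the odd number m appears in λ with multiplicity between 1 and 2^k − 1 inclusive. -/
/-!
Glaisher's map splits every part `2 ^ i * v` (`v` odd) into `2 ^ i` parts `v`. On partitions into
distinct parts it is injective: the multiplicity of `v` in the image, written in binary, lists the
exponents `i` for which `2 ^ i * v` was a part.

Match a `c1` partition with repeated part `2 ^ j * m` and an `a1` partition with even part
`2 ^ k * m` when both have the same image under Glaisher's map and `j < k` are adjacent set bits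
of the multiplicity `N` of `m` in that image. For a `c1` partition, `N = 3 * 2 ^ j + M` where bit
`j` of `M` is clear, so bit `j` of `N` is set and `k` is the next set bit above it. For an `a1`
partition, `N = 2 ^ k * d + c` with `d` odd and `0 < c < 2 ^ k`, and `j` is the top bit of `c`.
Either partition is recovered from the common image together with `j`, `k` and `m`, so this
matching is a bijection.
-/

open Finset
open scoped Classical

namespace Nat

theorem factorization_two_pow_mul_of_odd {k m : ℕ} (hm : Odd m) :
    (2 ^ k * m).factorization 2 = k := by
  simp [factorization_mul (pow_ne_zero k two_ne_zero) hm.pos.ne',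
    factorization_eq_zero_of_not_dvd hm.not_two_dvd_nat, prime_two.factorization_self]

theorem ordCompl_two_pow_mul_of_odd {k m : ℕ} (hm : Odd m) : ordCompl[2] (2 ^ k * m) = m :=
  ordCompl_pow_mul_of_not_dvd k prime_two hm.not_two_dvd_nat

theorem odd_ordCompl_two {n : ℕ} (hn : n ≠ 0) : Odd (ordCompl[2] n) :=
  Nat.odd_iff.2 (Nat.two_dvd_ne_zero.1 (not_dvd_ordCompl prime_two hn))

theorem two_pow_mul_odd_inj {k k' m m' : ℕ} (hm : Odd m) (hm' : Odd m')
    (h : 2 ^ k * m = 2 ^ k' * m') : k = k' ∧ m = m' := by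
  constructor
  · rw [← factorization_two_pow_mul_of_odd (k := k) hm, h, factorization_two_pow_mul_of_odd hm']
  · rw [← ordCompl_two_pow_mul_of_odd (k := k) hm, h, ordCompl_two_pow_mul_of_odd hm']

theorem testBit_iff_two_pow_le_mod {x j : ℕ} : x.testBit j ↔ 2 ^ j ≤ x % 2 ^ (j + 1) := by
  have hlt : x % 2 ^ (j + 1) < 2 ^ (j + 1) := mod_lt _ (by positivity)
  have hbit : x.testBit j = (x % 2 ^ (j + 1)).testBit j := by simp
  rw [hbit]
  constructor
  · intro h
    by_contra hle
    rw [testBit_lt_two_pow (not_le.1 hle)] at h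
    exact absurd h (by decide)
  · exact fun h => testBit_of_two_pow_le_and_two_pow_add_one_gt h hlt

-- `j < k` are consecutive set bits of `N`: `j` is the top bit of `N % 2 ^ k`, and bit `k` is set.
def AdjacentBits (N j k : ℕ) : Prop :=
  j < k ∧ 2 ^ j ≤ N % 2 ^ k ∧ N % 2 ^ k < 2 ^ (j + 1) ∧ Odd (N / 2 ^ k)

theorem adjacentBits_two_pow_mul_add {d c j k : ℕ} (hd : Odd d) (hjk : j < k)
    (hc : 2 ^ j ≤ c) (hc' : c < 2 ^ (j + 1)) : AdjacentBits (2 ^ k * d + c) j k := by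
  have hck : c < 2 ^ k := hc'.trans_le (Nat.pow_le_pow_right two_pos hjk)
  have hmod : (2 ^ k * d + c) % 2 ^ k = c := by simp [Nat.mod_eq_of_lt hck]
  have hdiv : (2 ^ k * d + c) / 2 ^ k = d := by
    rw [Nat.mul_add_div (by positivity), Nat.div_eq_of_lt hck, add_zero]
  unfold AdjacentBits
  rw [hmod, hdiv]
  exact ⟨hjk, hc, hc', hd⟩

theorem adjacentBits_log {N k : ℕ} (hr : N % 2 ^ k ≠ 0) (hk : Odd (N / 2 ^ k)) :
    AdjacentBits N (Nat.log 2 (N % 2 ^ k)) k :=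
  ⟨log_lt_of_lt_pow hr (mod_lt _ (by positivity)), pow_log_le_self 2 hr,
    lt_pow_succ_log_self one_lt_two _, hk⟩

theorem AdjacentBits.left_unique {N j j' k : ℕ} (h : AdjacentBits N j k)
    (h' : AdjacentBits N j' k) : j = j' :=
  (log_eq_of_pow_le_of_lt_pow h.2.1 h.2.2.1).symm.trans
    (log_eq_of_pow_le_of_lt_pow h'.2.1 h'.2.2.1)

theorem two_pow_le_mod_of_odd_div {N k k' : ℕ} (hN : Odd (N / 2 ^ k)) (hk : k < k') :
    2 ^ k ≤ N % 2 ^ k' := by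
  obtain ⟨s, rfl⟩ := Nat.exists_eq_add_of_lt hk
  have hpos : N / 2 ^ k % 2 ^ (s + 1) ≠ 0 := by
    intro h0
    have h2 : 2 ∣ N / 2 ^ k :=
      (dvd_pow_self 2 s.succ_ne_zero).trans (Nat.dvd_of_mod_eq_zero h0)
    exact (Nat.not_even_iff_odd.2 hN) (even_iff_two_dvd.2 h2)
  rw [show k + s + 1 = k + (s + 1) by omega, pow_add, Nat.mod_mul]
  have := Nat.le_mul_of_pos_right (2 ^ k) (Nat.pos_of_ne_zero hpos)
  omega

theorem AdjacentBits.right_unique {N j k k' : ℕ} (h : AdjacentBits N j k)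
    (h' : AdjacentBits N j k') : k = k' := by
  have key : ∀ {k k'}, AdjacentBits N j k → AdjacentBits N j k' → ¬ k < k' := fun h h' hlt =>
    absurd ((Nat.pow_le_pow_right two_pos h.1).trans (two_pow_le_mod_of_odd_div h.2.2.2 hlt))
      (not_le.2 h'.2.2.1)
  exact le_antisymm (not_lt.1 (key h' h)) (not_lt.1 (key h h'))

theorem exists_adjacentBits_two_pow_mul_three_add {M j : ℕ} (h : ¬ M.testBit j) :
    ∃ k, AdjacentBits (2 ^ j * 3 + M) j k := by
  have hr : M % 2 ^ (j + 1) < 2 ^ j := not_le.1 (testBit_iff_two_pow_le_mod.not.1 h)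
  obtain ⟨s, d, hd, hq⟩ := exists_eq_two_pow_mul_odd (M / 2 ^ (j + 1)).succ_ne_zero
  have hpow : 2 ^ (j + 1 + s) * d = 2 ^ (j + 1) * (M / 2 ^ (j + 1)) + 2 ^ (j + 1) := by
    rw [pow_add, mul_assoc, ← hq, Nat.mul_succ]
  have hM := Nat.div_add_mod M (2 ^ (j + 1))
  have h2 : 2 ^ (j + 1) = 2 ^ j * 2 := pow_succ 2 j
  refine ⟨j + 1 + s, ?_⟩
  rw [show 2 ^ j * 3 + M = 2 ^ (j + 1 + s) * d + (2 ^ j + M % 2 ^ (j + 1)) by omega]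
  exact adjacentBits_two_pow_mul_add hd (by omega) (by omega) (by omega)

theorem AdjacentBits.exists_eq_two_pow_mul_three_add {N j k : ℕ} (h : AdjacentBits N j k) :
    ∃ M, N = 2 ^ j * 3 + M ∧ ¬ M.testBit j := by
  obtain ⟨hjk, hc, hc', hd⟩ := h
  have hmod : N % 2 ^ (j + 1) = N % 2 ^ k := by
    rw [← Nat.mod_mod_of_dvd N (pow_dvd_pow 2 hjk), Nat.mod_eq_of_lt hc']
  have hkN : 2 ^ k ≤ N := (Nat.one_le_div_iff (by positivity)).1 hd.pos
  have hq : 0 < N / 2 ^ (j + 1) :=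
    (Nat.one_le_div_iff (by positivity)).2 ((Nat.pow_le_pow_right two_pos hjk).trans hkN)
  have hN := Nat.div_add_mod N (2 ^ (j + 1))
  have hle := Nat.le_mul_of_pos_right (2 ^ (j + 1)) hq
  have h2 : 2 ^ (j + 1) = 2 ^ j * 2 := pow_succ 2 j
  refine ⟨2 ^ (j + 1) * (N / 2 ^ (j + 1) - 1) + (N % 2 ^ k - 2 ^ j), ?_, ?_⟩
  · rw [Nat.mul_sub_one]
    omega
  · rw [testBit_iff_two_pow_le_mod, Nat.mul_add_mod, Nat.mod_eq_of_lt (by omega)]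
    omega

end Nat

namespace Multiset

open _root_.Nat

def oddSplit (s : Multiset ℕ) : Multiset ℕ :=
  s.bind fun p => replicate (2 ^ p.factorization 2) (ordCompl[2] p)

theorem oddSplit_add (s t : Multiset ℕ) : oddSplit (s + t) = oddSplit s + oddSplit t :=
  add_bind s t _

theorem oddSplit_replicate_two_pow_mul {m : ℕ} (hm : Odd m) (c k : ℕ) :
    oddSplit (replicate c (2 ^ k * m)) = replicate (2 ^ k * c) m := by
  induction c with
  | zero => simp [oddSplit]
  | succ c ih =>
    rw [replicate_succ, oddSplit, cons_bind, ← oddSplit, ih, ordCompl_two_pow_mul_of_odd hm,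
      factorization_two_pow_mul_of_odd hm, ← replicate_add, mul_add_one, add_comm]

theorem oddSplit_of_forall_odd {s : Multiset ℕ} (hs : ∀ p ∈ s, Odd p) : oddSplit s = s := by
  have hodd : ∀ p ∈ s, replicate (2 ^ p.factorization 2) (ordCompl[2] p) = {p} := fun p hp => by
    simp [factorization_eq_zero_of_not_dvd (hs p hp).not_two_dvd_nat, replicate_one]
  rw [oddSplit, bind_congr hodd, bind_singleton, map_id']

theorem sum_oddSplit (s : Multiset ℕ) : (oddSplit s).sum = s.sum := by
  simp [oddSplit, sum_bind, ordProj_mul_ordCompl_eq_self]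

theorem odd_of_mem_oddSplit {s : Multiset ℕ} (h0 : 0 ∉ s) {v : ℕ} (hv : v ∈ oddSplit s) :
    Odd v := by
  obtain ⟨p, hp, hvp⟩ := mem_bind.1 hv
  rw [eq_of_mem_replicate hvp]
  exact odd_ordCompl_two (ne_of_mem_of_not_mem hp h0)

theorem count_oddSplit_val (T : Finset ℕ) (v : ℕ) :
    count v (oddSplit T.val) = ∑ p ∈ T with ordCompl[2] p = v, 2 ^ p.factorization 2 := by
  rw [Finset.sum_filter, Finset.sum_eq_multiset_sum, oddSplit, count_bind]
  simp [count_replicate]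

theorem testBit_count_oddSplit_val {T : Finset ℕ} {v : ℕ} (hv : Odd v) (i : ℕ) :
    (count v (oddSplit T.val)).testBit i ↔ 2 ^ i * v ∈ T := by
  have hinj : Set.InjOn (fun p : ℕ => p.factorization 2) ↑(T.filter (ordCompl[2] · = v)) := by
    intro p hp q hq hpq
    rw [← ordProj_mul_ordCompl_eq_self p 2, ← ordProj_mul_ordCompl_eq_self q 2]
    simp_all
  rw [count_oddSplit_val, ← Finset.sum_image hinj, ← mem_bitIndices, ← List.mem_toFinset,
    Finset.toFinset_bitIndices_sum_two_pow]
  simp only [Finset.mem_image, Finset.mem_filter]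
  constructor
  · rintro ⟨p, ⟨hp, rfl⟩, rfl⟩
    rwa [ordProj_mul_ordCompl_eq_self]
  · intro h
    exact ⟨_, ⟨h, ordCompl_two_pow_mul_of_odd hv⟩, factorization_two_pow_mul_of_odd hv⟩

theorem _root_.Finset.eq_of_oddSplit_val_eq {T T' : Finset ℕ} (h0 : 0 ∉ T) (h0' : 0 ∉ T')
    (h : oddSplit T.val = oddSplit T'.val) : T = T' := by
  ext p
  rcases eq_or_ne p 0 with rfl | hp
  · simp [h0, h0']
  have hodd := odd_ordCompl_two hp
  rw [← ordProj_mul_ordCompl_eq_self p 2, ← testBit_count_oddSplit_val hodd,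
    ← testBit_count_oddSplit_val hodd, h]

theorem exists_finset_oddSplit_val_eq {O : Multiset ℕ} (hO : ∀ v ∈ O, Odd v) :
    ∃ T : Finset ℕ, 0 ∉ T ∧ oddSplit T.val = O := by
  set T := O.toFinset.biUnion fun v => (O.count v).bitIndices.toFinset.image (2 ^ · * v)
  have hmem : ∀ {v} (i), Odd v → (2 ^ i * v ∈ T ↔ (O.count v).testBit i) := by
    intro v i hv
    simp only [T, Finset.mem_biUnion, Finset.mem_image, List.mem_toFinset, mem_bitIndices,
      Multiset.mem_toFinset]
    constructor
    · rintro ⟨w, hw, i', hi', he⟩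
      obtain ⟨rfl, rfl⟩ := two_pow_mul_odd_inj (hO w hw) hv he
      exact hi'
    · intro hi
      have hvO : v ∈ O := count_pos.1 (Nat.pos_of_ne_zero fun h => by simp [h] at hi)
      exact ⟨v, hvO, i, hi, rfl⟩
  have h0 : 0 ∉ T := by
    simp only [T, Finset.mem_biUnion, Finset.mem_image, not_exists, not_and]
    intro v hv i _ h
    exact (mul_ne_zero (pow_ne_zero i two_ne_zero) (hO v (Multiset.mem_toFinset.1 hv)).pos.ne') h
  refine ⟨T, h0, ext.2 fun v => ?_⟩
  by_cases hv : Odd v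
  · exact eq_of_testBit_eq fun i =>
      Bool.eq_iff_iff.2 ((testBit_count_oddSplit_val hv i).trans (hmem i hv))
  · rw [count_eq_zero.2 (mt (odd_of_mem_oddSplit h0) hv), count_eq_zero.2 (mt (hO v) hv)]

theorem filter_ne_add_replicate_count {α : Type*} [DecidableEq α] (s : Multiset α) (a : α) :
    s.filter (· ≠ a) + replicate (s.count a) a = s := by
  rw [← filter_eq', add_comm]
  exact filter_add_not (· = a) s

def bundle (O : Multiset ℕ) (m k : ℕ) : Multiset ℕ :=
  O.filter (· ≠ m) + replicate (O.count m % 2 ^ k) m + replicate (O.count m / 2 ^ k) (2 ^ k * m)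

theorem oddSplit_bundle {O : Multiset ℕ} (hO : ∀ v ∈ O, Odd v) {m : ℕ} (hm : Odd m) (k : ℕ) :
    oddSplit (bundle O m k) = O := by
  rw [bundle, oddSplit_add, oddSplit_add,
    oddSplit_of_forall_odd fun v hv => hO v (mem_of_mem_filter hv),
    oddSplit_of_forall_odd fun v hv => eq_of_mem_replicate hv ▸ hm,
    oddSplit_replicate_two_pow_mul hm, add_assoc, ← replicate_add, Nat.mod_add_div,
    filter_ne_add_replicate_count]

theorem bundle_add_replicate {U : Multiset ℕ} {m k : ℕ} (hU : U.count m < 2 ^ k) (d : ℕ) :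
    bundle (U + replicate (2 ^ k * d) m) m k = U + replicate d (2 ^ k * m) := by
  have hcount : (U + replicate (2 ^ k * d) m).count m = 2 ^ k * d + U.count m := by
    rw [count_add, count_replicate_self, add_comm]
  have hfilter : (replicate (2 ^ k * d) m).filter (· ≠ m) = 0 :=
    filter_eq_nil.2 fun x hx => not_not.2 (eq_of_mem_replicate hx)
  have hmod : (2 ^ k * d + U.count m) % 2 ^ k = U.count m := by simp [Nat.mod_eq_of_lt hU]
  rw [bundle, hcount, hmod, Nat.mul_add_div (by positivity), Nat.div_eq_of_lt hU, add_zero,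
    filter_add, hfilter, add_zero, filter_ne_add_replicate_count]

theorem count_bundle_self (O : Multiset ℕ) {m k : ℕ} (hm : m ≠ 0) (hk : k ≠ 0) :
    (bundle O m k).count m = O.count m % 2 ^ k := by
  have hne : 2 ^ k * m ≠ m := fun h => by
    have := Nat.eq_of_mul_eq_mul_right (Nat.pos_of_ne_zero hm) (h.trans (one_mul m).symm)
    exact hk (Nat.pow_eq_one.1 this |>.resolve_left (by norm_num))
  simp [bundle, count_replicate, hne]

theorem count_bundle_two_pow_mul {O : Multiset ℕ} (hO : ∀ v ∈ O, Odd v) {m k : ℕ}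
    (hm : Odd m) (hk : k ≠ 0) : (bundle O m k).count (2 ^ k * m) = O.count m / 2 ^ k := by
  have heven : Even (2 ^ k * m) := (Nat.even_pow.2 ⟨even_two, hk⟩).mul_right m
  have hO' : 2 ^ k * m ∉ O := fun h => Nat.not_even_iff_odd.2 (hO _ h) heven
  have hne : m ≠ 2 ^ k * m := fun h => Nat.not_even_iff_odd.2 hm (h ▸ heven)
  simp [bundle, count_replicate, hne, hO']

end Multiset

open Multiset

def IsC1 (a : ℕ) (s : Multiset ℕ) : Prop :=
  s.count a = 3 ∧ ∀ q ∈ s.toFinset, q ≠ a → s.count q = 1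

def IsA1 (k m : ℕ) (s : Multiset ℕ) : Prop :=
  1 ≤ k ∧ Odd m ∧ s.toFinset.filter (fun p => Even p) = {2 ^ k * m} ∧
    Odd (s.count (2 ^ k * m)) ∧ 1 ≤ s.count m ∧ s.count m ≤ 2 ^ k - 1

theorem isC1_iff {a : ℕ} {s : Multiset ℕ} :
    IsC1 a s ↔ ∃ T : Finset ℕ, a ∉ T ∧ s = replicate 3 a + T.val := by
  constructor
  · rintro ⟨ha, hq⟩
    refine ⟨s.toFinset.erase a, Finset.notMem_erase a _, ext.2 fun q => ?_⟩
    simp only [Multiset.count_add, count_replicate, count_eq_of_nodup (Finset.nodup _),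
      Finset.mem_val, Finset.mem_erase, Multiset.mem_toFinset]
    by_cases hqa : q = a
    · simp [hqa, ha]
    · by_cases hqs : q ∈ s
      · simp [hqa, hq q (Multiset.mem_toFinset.2 hqs) hqa, hqs, Ne.symm hqa]
      · simp [hqs, Ne.symm hqa]
  · rintro ⟨T, ha, rfl⟩
    refine ⟨by simp [ha], fun q hq hqa => ?_⟩
    have hqT : q ∈ T := by simpa [hqa] using hq
    rw [Multiset.count_add, count_replicate, if_neg (Ne.symm hqa),
      count_eq_of_nodup (Finset.nodup _), if_pos (Finset.mem_val.mpr hqT)]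

theorem IsC1.mem {a : ℕ} {s : Multiset ℕ} (h : IsC1 a s) : a ∈ s :=
  count_pos.1 (by rw [h.1]; norm_num)

theorem IsC1.unique {a b : ℕ} {s : Multiset ℕ} (ha : IsC1 a s) (hb : IsC1 b s) : a = b := by
  by_contra hne
  have := ha.2 b (Multiset.mem_toFinset.2 hb.mem) (Ne.symm hne)
  rw [hb.1] at this
  exact absurd this (by norm_num)

theorem IsC1.eq_of_oddSplit_eq {a : ℕ} {s s' : Multiset ℕ} (h0 : 0 ∉ s) (h0' : 0 ∉ s')
    (h : IsC1 a s) (h' : IsC1 a s') (hs : oddSplit s = oddSplit s') : s = s' := by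
  obtain ⟨T, -, rfl⟩ := isC1_iff.1 h
  obtain ⟨T', -, rfl⟩ := isC1_iff.1 h'
  rw [oddSplit_add, oddSplit_add] at hs
  rw [Finset.eq_of_oddSplit_val_eq (fun hT => h0 (mem_add.2 (Or.inr hT)))
    (fun hT => h0' (mem_add.2 (Or.inr hT))) (add_left_cancel hs)]

theorem IsA1.unique {k k' m m' : ℕ} {s : Multiset ℕ} (h : IsA1 k m s) (h' : IsA1 k' m' s) :
    k = k' ∧ m = m' :=
  Nat.two_pow_mul_odd_inj h.2.1 h'.2.1 (Finset.singleton_inj.1 (h.2.2.1.symm.trans h'.2.2.1))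

theorem IsA1.zero_notMem {k m : ℕ} {s : Multiset ℕ} (h : IsA1 k m s) : 0 ∉ s := by
  intro hs
  have h0 : 0 ∈ s.toFinset.filter (fun p => Even p) :=
    Finset.mem_filter.2 ⟨Multiset.mem_toFinset.2 hs, ⟨0, rfl⟩⟩
  rw [h.2.2.1, Finset.mem_singleton, eq_comm, Nat.mul_eq_zero] at h0
  exact h0.elim (pow_ne_zero k two_ne_zero) h.2.1.pos.ne'

theorem IsA1.eq_bundle {k m : ℕ} {t : Multiset ℕ} (h : IsA1 k m t) :
    t = bundle (oddSplit t) m k := by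
  obtain ⟨hk, hm, hev, -, -, hc⟩ := h
  set e := 2 ^ k * m
  have hU : ∀ x ∈ t.filter (· ≠ e), Odd x := by
    intro x hx
    obtain ⟨hxt, hxe⟩ := mem_filter.1 hx
    by_contra hodd
    have hx : x ∈ t.toFinset.filter (fun p => Even p) :=
      Finset.mem_filter.2 ⟨Multiset.mem_toFinset.2 hxt, Nat.not_odd_iff_even.1 hodd⟩
    rw [hev] at hx
    exact hxe (Finset.mem_singleton.1 hx)
  have hme : m ≠ e := fun h => Nat.not_even_iff_odd.2 hm
    (h ▸ (Nat.even_pow.2 ⟨even_two, by omega⟩).mul_right m)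
  have hcount : (t.filter (· ≠ e)).count m < 2 ^ k := by
    rw [count_filter, if_pos hme]
    have : 0 < 2 ^ k := by positivity
    omega
  conv_rhs => rw [← filter_ne_add_replicate_count t e, oddSplit_add, oddSplit_of_forall_odd hU,
    oddSplit_replicate_two_pow_mul hm, bundle_add_replicate hcount, filter_ne_add_replicate_count]

theorem isA1_bundle {O : Multiset ℕ} (hO : ∀ v ∈ O, Odd v) {j k m : ℕ} (hm : Odd m)
    (h : Nat.AdjacentBits (O.count m) j k) : IsA1 k m (bundle O m k) := by
  obtain ⟨hjk, hc, hc', hd⟩ := h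
  have hk : k ≠ 0 := by omega
  refine ⟨by omega, hm, ?_, ?_, ?_, ?_⟩
  · ext x
    simp only [Finset.mem_filter, Multiset.mem_toFinset, Finset.mem_singleton]
    constructor
    · rintro ⟨hx, hxe⟩
      simp only [bundle, mem_add, Multiset.mem_filter] at hx
      rcases hx with (⟨hxO, -⟩ | hx) | hx
      · exact absurd hxe (Nat.not_even_iff_odd.2 (hO x hxO))
      · exact absurd hxe (Nat.not_even_iff_odd.2 (eq_of_mem_replicate hx ▸ hm))
      · exact eq_of_mem_replicate hx
    · rintro rfl
      refine ⟨count_pos.1 ?_, (Nat.even_pow.2 ⟨even_two, hk⟩).mul_right m⟩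
      rw [count_bundle_two_pow_mul hO hm hk]
      exact hd.pos
  · rwa [count_bundle_two_pow_mul hO hm hk]
  · rw [count_bundle_self O hm.pos.ne' hk]
    exact le_trans (Nat.one_le_two_pow) hc
  · rw [count_bundle_self O hm.pos.ne' hk]
    have : O.count m % 2 ^ k < 2 ^ k := Nat.mod_lt _ (by positivity)
    omega

theorem IsA1.exists_adjacentBits {k m : ℕ} {t : Multiset ℕ} (h : IsA1 k m t) :
    ∃ j, Nat.AdjacentBits ((oddSplit t).count m) j k := by
  have hO : ∀ v ∈ oddSplit t, Odd v := fun v => odd_of_mem_oddSplit h.zero_notMem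
  have hk : k ≠ 0 := by have := h.1; omega
  have hm := h.2.1
  have hd := h.2.2.2.1
  have hc := h.2.2.2.2.1
  rw [h.eq_bundle, count_bundle_self _ hm.pos.ne' hk] at hc
  rw [h.eq_bundle, count_bundle_two_pow_mul hO hm hk] at hd
  exact ⟨_, Nat.adjacentBits_log (by omega) hd⟩

def Corresponds (s t : Multiset ℕ) : Prop :=
  oddSplit s = oddSplit t ∧ ∃ j k m, IsC1 (2 ^ j * m) s ∧ IsA1 k m t ∧
    Nat.AdjacentBits ((oddSplit s).count m) j k

theorem Corresponds.left_unique {s s' t : Multiset ℕ} (h0 : 0 ∉ s) (h0' : 0 ∉ s')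
    (h : Corresponds s t) (h' : Corresponds s' t) : s = s' := by
  obtain ⟨hs, j, k, m, hC, hA, hjk⟩ := h
  obtain ⟨hs', j', k', m', hC', hA', hjk'⟩ := h'
  obtain ⟨rfl, rfl⟩ := hA.unique hA'
  rw [hs, ← hs'] at hjk
  obtain rfl := hjk.left_unique hjk'
  exact hC.eq_of_oddSplit_eq h0 h0' hC' (hs.trans hs'.symm)

theorem Corresponds.right_unique {s t t' : Multiset ℕ} (h : Corresponds s t)
    (h' : Corresponds s t') : t = t' := by
  obtain ⟨hs, j, k, m, hC, hA, hjk⟩ := h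
  obtain ⟨hs', j', k', m', hC', hA', hjk'⟩ := h'
  obtain ⟨rfl, rfl⟩ := Nat.two_pow_mul_odd_inj hA.2.1 hA'.2.1 (hC.unique hC')
  obtain rfl := hjk.right_unique hjk'
  rw [hA.eq_bundle, hA'.eq_bundle, ← hs, ← hs']

theorem exists_corresponds_of_isC1 {a : ℕ} {s : Multiset ℕ} (h0 : 0 ∉ s) (h : IsC1 a s) :
    ∃ t, 0 ∉ t ∧ t.sum = s.sum ∧ Corresponds s t := by
  have ha0 : a ≠ 0 := ne_of_mem_of_not_mem h.mem h0
  obtain ⟨j, m, hm, rfl⟩ := Nat.exists_eq_two_pow_mul_odd ha0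
  have hO : ∀ v ∈ oddSplit s, Odd v := fun v => odd_of_mem_oddSplit h0
  obtain ⟨T, hT, hsT⟩ := isC1_iff.1 h
  have hN : (oddSplit s).count m = 2 ^ j * 3 + (oddSplit T.val).count m := by
    rw [hsT, oddSplit_add, oddSplit_replicate_two_pow_mul hm, Multiset.count_add,
      count_replicate_self]
  have hbit : ¬ ((oddSplit T.val).count m).testBit j := by
    rwa [testBit_count_oddSplit_val hm]
  obtain ⟨k, hk⟩ := Nat.exists_adjacentBits_two_pow_mul_three_add hbit
  rw [← hN] at hk
  have hA := isA1_bundle hO hm hk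
  refine ⟨bundle (oddSplit s) m k, hA.zero_notMem, ?_, (oddSplit_bundle hO hm k).symm,
    j, k, m, h, hA, hk⟩
  rw [← sum_oddSplit, oddSplit_bundle hO hm, sum_oddSplit]

theorem exists_corresponds_of_isA1 {k m : ℕ} {t : Multiset ℕ} (h : IsA1 k m t) :
    ∃ s, 0 ∉ s ∧ s.sum = t.sum ∧ Corresponds s t := by
  have hm := h.2.1
  obtain ⟨j, hj⟩ := h.exists_adjacentBits
  obtain ⟨M, hN, hM⟩ := hj.exists_eq_two_pow_mul_three_add
  have hle : replicate (2 ^ j * 3) m ≤ oddSplit t := le_count_iff_replicate_le.1 (by omega)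
  obtain ⟨T, hT0, hT⟩ := exists_finset_oddSplit_val_eq (O := oddSplit t - replicate (2 ^ j * 3) m)
    fun v hv => odd_of_mem_oddSplit h.zero_notMem (mem_of_le (Multiset.sub_le_self _ _) hv)
  have haT : 2 ^ j * m ∉ T := by
    rw [← testBit_count_oddSplit_val hm, hT, count_sub, count_replicate_self]
    rwa [hN, Nat.add_sub_cancel_left]
  have hs : oddSplit (replicate 3 (2 ^ j * m) + T.val) = oddSplit t := by
    rw [oddSplit_add, oddSplit_replicate_two_pow_mul hm, hT, add_tsub_cancel_of_le hle]
  refine ⟨replicate 3 (2 ^ j * m) + T.val, ?_, ?_, hs, j, k, m,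
    isC1_iff.2 ⟨T, haT, rfl⟩, h, hs ▸ hj⟩
  · rintro h0
    rcases mem_add.1 h0 with h0 | h0
    · exact (mul_ne_zero (pow_ne_zero j two_ne_zero) hm.pos.ne') (eq_of_mem_replicate h0).symm
    · exact hT0 h0
  · rw [← sum_oddSplit, hs, sum_oddSplit]

theorem Nat.Partition.zero_notMem_parts {n : ℕ} (P : n.Partition) : 0 ∉ P.parts :=
  fun h => (P.parts_pos h).false

theorem Nat.Partition.exists_parts_eq {n : ℕ} {l : Multiset ℕ} (h0 : 0 ∉ l) (hl : l.sum = n) :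
    ∃ P : n.Partition, P.parts = l :=
  ⟨⟨l, fun hi => Nat.pos_of_ne_zero (ne_of_mem_of_not_mem hi h0), hl⟩, rfl⟩

theorem c1_eq_a1_general (n : ℕ) :
    (Finset.univ.filter (fun P : n.Partition =>
        ∃ p ∈ P.parts.toFinset, P.parts.count p = 3 ∧
          ∀ q ∈ P.parts.toFinset, q ≠ p → P.parts.count q = 1)).card =
      (Finset.univ.filter (fun P : n.Partition =>
        ∃ k m : ℕ, 1 ≤ k ∧ Odd m ∧
          P.parts.toFinset.filter (fun p => Even p) = {2 ^ k * m} ∧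
          Odd (P.parts.count (2 ^ k * m)) ∧
          1 ≤ P.parts.count m ∧ P.parts.count m ≤ 2 ^ k - 1)).card := by
  apply le_antisymm
  · refine card_le_card_of_forall_subsingleton (fun P Q => Corresponds P.parts Q.parts)
      (fun P hP => ?_) fun Q _ P₁ hP₁ P₂ hP₂ => ?_
    · obtain ⟨a, -, hC⟩ := (mem_filter.1 hP).2
      obtain ⟨t, ht0, hts, hPt⟩ := exists_corresponds_of_isC1 (P.zero_notMem_parts) hC
      obtain ⟨Q, rfl⟩ := Nat.Partition.exists_parts_eq ht0 (hts.trans P.parts_sum)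
      obtain ⟨-, k, m, -, hA, -⟩ := hPt.2
      exact ⟨Q, mem_filter.2 ⟨mem_univ Q, k, m, hA⟩, hPt⟩
    · exact Nat.Partition.ext (hP₁.2.left_unique P₁.zero_notMem_parts P₂.zero_notMem_parts hP₂.2)
  · refine card_le_card_of_forall_subsingleton' (fun P Q => Corresponds P.parts Q.parts)
      (fun Q hQ => ?_) fun P _ Q₁ hQ₁ Q₂ hQ₂ => ?_
    · obtain ⟨k, m, hA⟩ := (mem_filter.1 hQ).2
      obtain ⟨s, hs0, hst, hsQ⟩ := exists_corresponds_of_isA1 hA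
      obtain ⟨P, rfl⟩ := Nat.Partition.exists_parts_eq hs0 (hst.trans Q.parts_sum)
      obtain ⟨j, -, m, hC, -⟩ := hsQ.2
      exact ⟨P, mem_filter.2 ⟨mem_univ P, _, Multiset.mem_toFinset.2 hC.mem, hC⟩, hsQ⟩
    · exact Nat.Partition.ext (hQ₁.2.right_unique hQ₂.2)

theorem c1_eq_a1 (n : ℕ) (hn : 0 < n) :
    (Finset.univ.filter (fun P : n.Partition =>
        ∃ p ∈ P.parts.toFinset, P.parts.count p = 3 ∧
          ∀ q ∈ P.parts.toFinset, q ≠ p → P.parts.count q = 1)).card =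
      (Finset.univ.filter (fun P : n.Partition =>
        ∃ k m : ℕ, 1 ≤ k ∧ Odd m ∧
          P.parts.toFinset.filter (fun p => Even p) = {2 ^ k * m} ∧
          Odd (P.parts.count (2 ^ k * m)) ∧
          1 ≤ P.parts.count m ∧ P.parts.count m ≤ 2 ^ k - 1)).card :=
  c1_eq_a1_general n
end

section
/- For every positive integer n, the total number of parts over all partitions of n into distinct parts equals the total number of 1's in the binary representations of the multiplicities of all part values over all partitions of n into odd parts. -/
/-!
Glaisher's bijection: in a partition into odd parts, write the multiplicity `m` of each part `i`
in binary, `m = ∑ 2 ^ k`, and replace the `m` copies of `i` by the parts `i * 2 ^ k`. As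
`i * 2 ^ k` determines both its odd part `i` and its `2`-adic valuation `k`, the new parts are
distinct and the map is injective; their number is the number of binary ones of the
multiplicities. Euler's theorem (as many odd as distinct partitions) makes the map a bijection.
-/

open Finset

namespace Nat

theorem count_one_digits_two_eq_length_bitIndices (m : ℕ) :
    (digits 2 m).count 1 = m.bitIndices.length := by
  induction m using Nat.binaryRec' with
  | zero => simp
  | bit b n hn ih =>
    rw [digits_two_eq_bits] at ih ⊢
    rw [bits_append_bit _ _ hn]
    cases b <;> simp [ih]

theorem factorization_mul_pow_self_of_not_dvd {p i : ℕ} (hp : p.Prime) (hi : ¬p ∣ i)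
    (k : ℕ) : (i * p ^ k).factorization p = k := by
  have hi0 : i ≠ 0 := by rintro rfl; exact hi (dvd_zero p)
  rw [factorization_mul hi0 (pow_ne_zero k hp.ne_zero), Finsupp.add_apply,
    factorization_eq_zero_of_not_dvd hi, hp.factorization_pow, Finsupp.single_eq_same, zero_add]

theorem eq_and_eq_of_mul_pow_eq_mul_pow {p i j k l : ℕ} (hp : p.Prime) (hi : ¬p ∣ i)
    (hj : ¬p ∣ j) (h : i * p ^ k = j * p ^ l) : i = j ∧ k = l := by
  obtain rfl : k = l := by
    rw [← factorization_mul_pow_self_of_not_dvd hp hi k, h,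
      factorization_mul_pow_self_of_not_dvd hp hj]
  exact ⟨Nat.eq_of_mul_eq_mul_right (pow_pos hp.pos k) h, rfl⟩

end Nat

theorem Multiset.bind_replicate {α β : Type*} (s : Multiset α) (f : α → ℕ) (b : β) :
    s.bind (fun a => replicate (f a) b) = replicate (s.map f).sum b := by
  induction s using Multiset.induction_on with
  | empty => simp
  | cons a s ih => simp [ih, replicate_add]

theorem Multiset.bind_toFinset_replicate_count {α : Type*} [DecidableEq α] (s : Multiset α) :
    s.toFinset.val.bind (fun a => replicate (s.count a) a) = s := by
  ext a
  rw [count_bind]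
  simp only [count_replicate]
  change ∑ b ∈ s.toFinset, _ = _
  rw [Finset.sum_ite_eq', ite_eq_left_iff]
  exact fun ha => (count_eq_zero.2 (mt mem_toFinset.2 ha)).symm

namespace Nat.Partition

variable {n : ℕ}

theorem not_two_dvd_of_mem_odds {P : n.Partition} (hP : P ∈ odds n) {i : ℕ}
    (hi : i ∈ P.parts) : ¬2 ∣ i := by
  simp only [odds, restricted, mem_filter, mem_univ, true_and] at hP
  exact fun h => hP i hi (even_iff_two_dvd.mpr h)

@[simps]
def binarySplit (P : n.Partition) : n.Partition where
  parts := P.parts.toFinset.val.bind fun i =>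
    ((P.parts.count i).bitIndices : Multiset ℕ).map (i * 2 ^ ·)
  parts_pos := by
    simp only [Multiset.mem_bind, Finset.mem_val, Multiset.mem_toFinset, Multiset.mem_map]
    rintro _ ⟨i, hi, k, -, rfl⟩
    exact Nat.mul_pos (P.parts_pos hi) (pow_pos two_pos k)
  parts_sum := by
    simp only [Multiset.sum_bind, Multiset.map_coe, Multiset.sum_coe, List.sum_map_mul_left,
      sum_map_two_pow_bitIndices]
    calc ∑ i ∈ P.parts.toFinset, i * P.parts.count i = P.parts.sum := by
          simp [sum_multiset_count, mul_comm]
      _ = n := P.parts_sum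

theorem card_binarySplit_parts (P : n.Partition) :
    Multiset.card (binarySplit P).parts =
      ∑ i ∈ P.parts.toFinset, (digits 2 (P.parts.count i)).count 1 := by
  rw [binarySplit_parts, Multiset.card_bind]
  exact sum_congr rfl fun i _ => by simp [count_one_digits_two_eq_length_bitIndices]

theorem binarySplit_mem_distincts {P : n.Partition} (hP : P ∈ odds n) :
    binarySplit P ∈ distincts n := by
  simp only [distincts, mem_filter, mem_univ, true_and, binarySplit_parts, Multiset.nodup_bind]
  have hodd : ∀ i ∈ P.parts.toFinset.val, ¬2 ∣ i := fun i hi =>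
    not_two_dvd_of_mem_odds hP (Multiset.mem_toFinset.mp hi)
  refine ⟨fun i hi => (Multiset.coe_nodup.2 bitIndices_nodup).map fun k l h =>
    (eq_and_eq_of_mul_pow_eq_mul_pow prime_two (hodd i hi) (hodd i hi) h).2, ?_⟩
  refine P.parts.toFinset.nodup.pairwise fun i hi j hj hij => Multiset.disjoint_left.2 ?_
  simp only [Multiset.mem_map]
  rintro _ ⟨k, -, rfl⟩ ⟨l, -, h⟩
  exact hij (eq_and_eq_of_mul_pow_eq_mul_pow prime_two (hodd i hi) (hodd j hj) h.symm).1

def mergeOddParts (s : Multiset ℕ) : Multiset ℕ :=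
  s.bind fun p => Multiset.replicate (2 ^ p.factorization 2) (ordCompl[2] p)

theorem mergeOddParts_map_mul_two_pow_bitIndices {i : ℕ} (hi : ¬2 ∣ i) (m : ℕ) :
    mergeOddParts ((m.bitIndices : Multiset ℕ).map (i * 2 ^ ·)) = Multiset.replicate m i := by
  simp only [mergeOddParts, Multiset.bind_map, factorization_mul_pow_self_of_not_dvd prime_two hi,
    mul_div_cancel_right₀ _ (pow_ne_zero _ two_ne_zero)]
  rw [Multiset.bind_replicate, Multiset.map_coe, Multiset.sum_coe, sum_map_two_pow_bitIndices]

theorem mergeOddParts_binarySplit_parts {P : n.Partition} (hP : P ∈ odds n) :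
    mergeOddParts (binarySplit P).parts = P.parts :=
  calc mergeOddParts (binarySplit P).parts
      = P.parts.toFinset.val.bind fun i =>
          mergeOddParts (((P.parts.count i).bitIndices : Multiset ℕ).map (i * 2 ^ ·)) :=
        Multiset.bind_assoc
    _ = P.parts.toFinset.val.bind fun i => Multiset.replicate (P.parts.count i) i :=
        Multiset.bind_congr fun _ hi => mergeOddParts_map_mul_two_pow_bitIndices
          (not_two_dvd_of_mem_odds hP (Multiset.mem_toFinset.mp hi)) _
    _ = P.parts := Multiset.bind_toFinset_replicate_count P.parts

theorem binarySplit_injOn : Set.InjOn binarySplit (odds n : Set n.Partition) :=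
  fun P hP Q hQ h => Nat.Partition.ext <| by
    rw [← mergeOddParts_binarySplit_parts hP, h, mergeOddParts_binarySplit_parts hQ]

end Nat.Partition

theorem distinct_parts_eq_binary_ones_general (n : ℕ) :
    ∑ P ∈ Nat.Partition.distincts n, Multiset.card P.parts =
      ∑ P ∈ Nat.Partition.odds n,
        ∑ i ∈ P.parts.toFinset, (Nat.digits 2 (P.parts.count i)).count 1 := by
  have hinj := Nat.Partition.binarySplit_injOn (n := n)
  have himage : (Nat.Partition.odds n).image Nat.Partition.binarySplit =
      Nat.Partition.distincts n :=
    eq_of_subset_of_card_le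
      (image_subset_iff.2 fun _ hP => Nat.Partition.binarySplit_mem_distincts hP)
      (by rw [card_image_of_injOn hinj, Nat.Partition.card_odds_eq_card_distincts])
  rw [← himage, sum_image hinj]
  exact sum_congr rfl fun P _ => Nat.Partition.card_binarySplit_parts P

theorem distinct_parts_eq_binary_ones (n : ℕ) (hn : 0 < n) :
    ∑ P ∈ Nat.Partition.distincts n, Multiset.card P.parts =
      ∑ P ∈ Nat.Partition.odds n,
        ∑ i ∈ P.parts.toFinset, (Nat.digits 2 (P.parts.count i)).count 1 :=
  distinct_parts_eq_binary_ones_general n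
end

section
/- Let λ be a partition of n in which exactly one part value 2^k·m (k ≥ 0, m odd) is repeated, with multiplicity f ≥ 2, and all other parts are distinct. Apply Glaisher-type merging of equal parts repeatedly to obtain a distinct-part partition μ. Order the parts of μ of the form 2^r·m with r ≥ k increasingly as ν_1 < ν_2 < ⋯, set ν_0 = 0, and let h be the positive integer with Σ_{i<h} ν_i < f·2^k·m ≤ Σ_{i≤h} ν_i. Then with N_h = (Σ_{i<h} ν_i)/(2^k·m), the number f − N_h is even and satisfies 0 < f − N_h ≤ 2^{r_h − k}, where ν_h = 2^{r_h}·m. -/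
/-!
Merging equal parts preserves the total size of the parts of the form `2^r·m`. Write
`c = 2^k·m`. In both `λ` and `μ` the parts `2^r·m` with `r < k` are distinct, so they add up to
less than `c`, while the parts with `r ≥ k` are multiples of `c`; hence the parts with `r ≥ k`
have the same total in `λ` and in `μ`, namely `ν_1 + ν_2 + ⋯ = f·c + (a multiple of 2c)`.
Every `ν_i` with `i ≥ h` exceeds `c` (when `h = 1` because `ν_1 ≥ f·c ≥ 2c`), so it is a
multiple of `2c`, and therefore `N_h ≡ f (mod 2)`. The two bounds are the defining inequalities
of `h` divided by `c`.
-/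

theorem Nat.two_pow_factorization_mul_of_ordCompl_eq {m p : ℕ} (hp : ordCompl[2] p = m) :
    2 ^ p.factorization 2 * m = p :=
  hp ▸ Nat.ordProj_mul_ordCompl_eq_self p 2

theorem Nat.two_pow_factorization_sub_mul_eq {k m p : ℕ} (hp : ordCompl[2] p = m) (hm : 0 < m)
    (hle : 2 ^ k * m ≤ p) : 2 ^ (p.factorization 2 - k) * (2 ^ k * m) = p := by
  rw [← two_pow_factorization_mul_of_ordCompl_eq hp] at hle
  have hk : k ≤ p.factorization 2 :=
    (Nat.pow_le_pow_iff_right one_lt_two).1 (Nat.le_of_mul_le_mul_right hle hm)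
  rw [← mul_assoc, ← pow_add, Nat.sub_add_cancel hk,
    two_pow_factorization_mul_of_ordCompl_eq hp]

theorem Nat.two_mul_dvd_of_two_pow_mul_lt {k m p : ℕ} (hp : ordCompl[2] p = m)
    (hlt : 2 ^ k * m < p) : 2 * (2 ^ k * m) ∣ p := by
  obtain ⟨r, rfl⟩ : ∃ r, p = 2 ^ r * m :=
    ⟨_, (two_pow_factorization_mul_of_ordCompl_eq hp).symm⟩
  have hkr : k < r := (Nat.pow_lt_pow_iff_right one_lt_two).1 (Nat.lt_of_mul_lt_mul_right hlt)
  rw [← mul_assoc, ← pow_succ']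
  exact Nat.mul_dvd_mul_right (Nat.pow_dvd_pow 2 hkr) m

theorem List.SortedLT.lt_getElem_of_lt_sum_take {α : Type*} [AddMonoid α] [Preorder α]
    {l : List α} (hl : l.SortedLT) {c : α} {i : ℕ} (hi : i < l.length)
    (hc : ∀ x ∈ l, c ≤ x) (hsum : c < (l.take (i + 1)).sum) : c < l[i] := by
  cases i with
  | zero => simpa [List.sum_take_succ l 0 hi] using hsum
  | succ j =>
    exact (hc _ (List.getElem_mem (Nat.zero_lt_of_lt hi))).trans_lt
      (hl.getElem_lt_getElem_of_lt (Nat.succ_pos j))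

theorem List.SortedLE.getElem_le_of_mem_drop {α : Type*} [Preorder α] {l : List α}
    (hl : l.SortedLE) {i : ℕ} {x : α} (hi : i < l.length) (hx : x ∈ l.drop i) :
    l[i] ≤ x := by
  obtain ⟨j, hj, rfl⟩ := List.mem_iff_getElem.1 hx
  simp only [List.getElem_drop]
  exact hl.getElem_le_getElem_of_le (Nat.le_add_right i j)

theorem List.SortedLT.two_mul_dvd_sum_drop {l : List ℕ} (hl : l.SortedLT) {k m i : ℕ}
    (hi : i < l.length) (hmem : ∀ p ∈ l, ordCompl[2] p = m ∧ 2 ^ k * m ≤ p)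
    (hsum : 2 ^ k * m < (l.take (i + 1)).sum) : 2 * (2 ^ k * m) ∣ (l.drop i).sum := by
  have hlt := hl.lt_getElem_of_lt_sum_take hi (fun x hx => (hmem x hx).2) hsum
  exact List.dvd_sum fun p hp => Nat.two_mul_dvd_of_two_pow_mul_lt
    (hmem p (List.mem_of_mem_drop hp)).1
    (hlt.trans_le (hl.sortedLE.getElem_le_of_mem_drop hi hp))

theorem Multiset.nodup_filter_of_count_eq_one {α : Type*} [DecidableEq α] {s : Multiset α}
    {P : α → Prop} [DecidablePred P] (h : ∀ a ∈ s, P a → s.count a = 1) :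
    (s.filter P).Nodup := by
  refine Multiset.nodup_iff_count_eq_one.2 fun a ha => ?_
  obtain ⟨has, hPa⟩ := Multiset.mem_filter.1 ha
  rw [Multiset.count_filter_of_pos hPa]
  exact h a has hPa

theorem Multiset.sum_lt_two_pow_mul_of_nodup {s : Multiset ℕ} {k m : ℕ} (hm : 0 < m)
    (hs : s.Nodup) (h : ∀ p ∈ s, ordCompl[2] p = m ∧ p < 2 ^ k * m) : s.sum < 2 ^ k * m := by
  set t := s.map (·.factorization 2)
  have hts : t.map (2 ^ · * m) = s := by
    rw [Multiset.map_map]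
    conv_rhs => rw [← Multiset.map_id s]
    exact Multiset.map_congr rfl fun p hp =>
      Nat.two_pow_factorization_mul_of_ordCompl_eq (h p hp).1
  have ht : t.Nodup := Multiset.Nodup.of_map _ (hts ▸ hs)
  have htk : ∀ r ∈ t, r < k := by
    rintro _ hr
    obtain ⟨p, hp, rfl⟩ := Multiset.mem_map.1 hr
    have hlt := (h p hp).2
    rw [← Nat.two_pow_factorization_mul_of_ordCompl_eq (h p hp).1] at hlt
    exact (Nat.pow_lt_pow_iff_right one_lt_two).1 (Nat.lt_of_mul_lt_mul_right hlt)
  calc s.sum = (∑ r ∈ ⟨t, ht⟩, 2 ^ r) * m := by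
        rw [← hts, Multiset.sum_map_mul_right]; rfl
    _ < 2 ^ k * m := Nat.mul_lt_mul_of_pos_right (Nat.geomSum_lt le_rfl htk) hm

theorem Multiset.exists_sum_eq_count_add_two_mul {s : Multiset ℕ} {k m : ℕ}
    (h : ∀ p ∈ s, ordCompl[2] p = m ∧ 2 ^ k * m ≤ p) :
    ∃ q, s.sum = (s.count (2 ^ k * m) + 2 * q) * (2 ^ k * m) := by
  obtain ⟨q, hq⟩ : 2 * (2 ^ k * m) ∣ (s.filter (· ≠ 2 ^ k * m)).sum :=
    Multiset.dvd_sum fun p hp => by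
      obtain ⟨hps, hne⟩ := Multiset.mem_filter.1 hp
      exact Nat.two_mul_dvd_of_two_pow_mul_lt (h p hps).1 (lt_of_le_of_ne (h p hps).2 hne.symm)
  refine ⟨q, ?_⟩
  calc s.sum = (s.filter (· = 2 ^ k * m)).sum + (s.filter (· ≠ 2 ^ k * m)).sum :=
        (Multiset.sum_filter_add_sum_filter_not _).symm
    _ = _ := by rw [Multiset.filter_eq', Multiset.sum_replicate, smul_eq_mul, hq]; ring

theorem Multiset.sum_filter_ordCompl_and_le_eq_div_mul {s : Multiset ℕ} {k m : ℕ} (hm : 0 < m)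
    (hlow : (s.filter (fun p => ordCompl[2] p = m ∧ p < 2 ^ k * m)).Nodup) :
    (s.filter (fun p => ordCompl[2] p = m ∧ 2 ^ k * m ≤ p)).sum =
      (s.filter (fun p => ordCompl[2] p = m)).sum / (2 ^ k * m) * (2 ^ k * m) := by
  obtain ⟨Q, hQ⟩ :
      2 ^ k * m ∣ (s.filter (fun p => ordCompl[2] p = m ∧ 2 ^ k * m ≤ p)).sum := by
    obtain ⟨q, hq⟩ := exists_sum_eq_count_add_two_mul fun p hp => (Multiset.mem_filter.1 hp).2
    exact Dvd.intro_left _ hq.symm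
  have hlt : (s.filter (fun p => ordCompl[2] p = m ∧ p < 2 ^ k * m)).sum < 2 ^ k * m :=
    sum_lt_two_pow_mul_of_nodup hm hlow fun p hp => (Multiset.mem_filter.1 hp).2
  have hsplit : (s.filter (fun p => ordCompl[2] p = m)).sum =
      (s.filter (fun p => ordCompl[2] p = m ∧ p < 2 ^ k * m)).sum + 2 ^ k * m * Q := by
    rw [← Multiset.sum_filter_add_sum_filter_not (2 ^ k * m ≤ ·), Multiset.filter_filter,
      Multiset.filter_filter, add_comm]
    simp only [not_le, and_comm, ← hQ]
  rw [hsplit, Nat.add_mul_div_left _ _ (by positivity), Nat.div_eq_of_lt hlt, zero_add, hQ,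
    mul_comm]

theorem Multiset.exists_sum_filter_ordCompl_div_eq {s : Multiset ℕ} {k m : ℕ} (hm : Odd m)
    (h : ∀ p ∈ s, p ≠ 2 ^ k * m → s.count p = 1) :
    ∃ q, (s.filter (fun p => ordCompl[2] p = m)).sum / (2 ^ k * m) =
      s.count (2 ^ k * m) + 2 * q := by
  have hc : 0 < 2 ^ k * m := Nat.mul_pos (by positivity) hm.pos
  obtain ⟨q, hq⟩ := exists_sum_eq_count_add_two_mul
    (s := s.filter (fun p => ordCompl[2] p = m ∧ 2 ^ k * m ≤ p)) fun p hp =>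
      (Multiset.mem_filter.1 hp).2
  rw [count_filter_of_pos ⟨Nat.ordCompl_pow_mul_of_not_dvd k Nat.prime_two hm.not_two_dvd_nat,
    le_rfl⟩, sum_filter_ordCompl_and_le_eq_div_mul hm.pos
      (nodup_filter_of_count_eq_one fun p hp hpc => h p hp hpc.2.ne)] at hq
  exact ⟨q, Nat.eq_of_mul_eq_mul_right hc hq⟩

theorem List.SortedLT.even_sub_sum_take_div_and_bounds {l : List ℕ} (hl : l.SortedLT)
    {k m f q h : ℕ} (hm : 0 < m) (hmem : ∀ p ∈ l, ordCompl[2] p = m ∧ 2 ^ k * m ≤ p)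
    (hf : 2 ≤ f) (hh1 : 1 ≤ h) (hh2 : h ≤ l.length) (hsum : l.sum = (f + 2 * q) * (2 ^ k * m))
    (hlow : (l.take (h - 1)).sum < f * (2 ^ k * m))
    (hhigh : f * (2 ^ k * m) ≤ (l.take h).sum) :
    Even (f - (l.take (h - 1)).sum / (2 ^ k * m)) ∧
      0 < f - (l.take (h - 1)).sum / (2 ^ k * m) ∧
      f - (l.take (h - 1)).sum / (2 ^ k * m) ≤
        2 ^ ((l.getD (h - 1) 0).factorization 2 - k) := by
  set c := 2 ^ k * m
  have hc : 0 < c := Nat.mul_pos (by positivity) hm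
  have hi : h - 1 < l.length := by omega
  rw [List.getD_eq_getElem _ _ hi]
  set ν := l[h - 1]
  have hν : 2 ^ (ν.factorization 2 - k) * c = ν :=
    Nat.two_pow_factorization_sub_mul_eq (hmem ν (List.getElem_mem hi)).1 hm
      (hmem ν (List.getElem_mem hi)).2
  obtain ⟨N, hN⟩ : c ∣ (l.take (h - 1)).sum := List.dvd_sum fun p hp =>
    Dvd.intro_left _ (Nat.two_pow_factorization_sub_mul_eq
      (hmem p (List.mem_of_mem_take hp)).1 hm (hmem p (List.mem_of_mem_take hp)).2)
  have hsum_take : (l.take h).sum = (l.take (h - 1)).sum + ν := by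
    rw [← List.sum_take_succ l (h - 1) hi, Nat.sub_add_cancel hh1]
  obtain ⟨b, hb⟩ : 2 * c ∣ (l.drop (h - 1)).sum := hl.two_mul_dvd_sum_drop hi hmem <| by
    rw [Nat.sub_add_cancel hh1]
    exact lt_of_lt_of_le (by omega) ((Nat.mul_le_mul_right c hf).trans hhigh)
  rw [hsum_take, hN, ← hν] at hhigh
  rw [hN] at hlow
  have hpar : N + 2 * b = f + 2 * q := Nat.eq_of_mul_eq_mul_right hc (by
    rw [← hsum, ← List.sum_take_add_sum_drop l (h - 1), hN, hb]; ring)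
  have hNf : N < f := lt_of_mul_lt_mul_left (a := c) (by linarith) hc.le
  have hfN : f ≤ N + 2 ^ (ν.factorization 2 - k) :=
    le_of_mul_le_mul_left (a := c) (by linarith) hc
  rw [hN, Nat.mul_div_cancel_left _ hc]
  exact ⟨⟨b - q, by omega⟩, by omega, by omega⟩

theorem merge_parameters (n : ℕ) (L M : n.Partition) (k m f : ℕ)
    (hm : Odd m) (hf : 2 ≤ f)
    -- exactly one repeated part value `2^k * m`, with multiplicity `f`,
    -- all other part values occurring once
    (hcount : L.parts.count (2 ^ k * m) = f)
    (hothers : ∀ q ∈ L.parts.toFinset, q ≠ 2 ^ k * m → L.parts.count q = 1)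
    -- `M` is the distinct-part partition obtained by repeatedly merging equal
    -- parts of `L`: it has distinct parts and, for every odd `m'`, the total
    -- size of parts with largest odd divisor `m'` is preserved
    (hM : M ∈ Nat.Partition.distincts n)
    (hmerge : ∀ m' : ℕ, Odd m' →
      ((M.parts.filter (fun p => ordCompl[2] p = m')).sum =
        (L.parts.filter (fun p => ordCompl[2] p = m')).sum))
    -- `l` lists the parts of `M` of the form `2^r * m` with `r ≥ k`,
    -- increasingly: `ν_1 < ν_2 < ⋯` (so `ν_i = l.getD (i-1) 0`)
    (l : List ℕ)
    (hl : l = Multiset.sort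
      (M.parts.filter (fun p => ordCompl[2] p = m ∧ 2 ^ k * m ≤ p)) (· ≤ ·))
    -- `h` is the positive integer with `Σ_{i<h} ν_i < f·2^k·m ≤ Σ_{i≤h} ν_i`
    (h : ℕ) (hh1 : 1 ≤ h) (hh2 : h ≤ l.length)
    (hlow : (l.take (h - 1)).sum < f * (2 ^ k * m))
    (hhigh : f * (2 ^ k * m) ≤ (l.take h).sum) :
    -- with `N_h = (Σ_{i<h} ν_i)/(2^k·m)` and `ν_h = 2^{r_h}·m`:
    -- `f − N_h` is even and `0 < f − N_h ≤ 2^{r_h − k}`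
    Even (f - (l.take (h - 1)).sum / (2 ^ k * m)) ∧
      0 < f - (l.take (h - 1)).sum / (2 ^ k * m) ∧
      f - (l.take (h - 1)).sum / (2 ^ k * m) ≤
        2 ^ ((l.getD (h - 1) 0).factorization 2 - k) := by
  have hm0 : 0 < m := hm.pos
  set c := 2 ^ k * m
  have hlM : (l : Multiset ℕ) = M.parts.filter (fun p => ordCompl[2] p = m ∧ c ≤ p) := by
    rw [hl, Multiset.sort_eq]
  have hmem : ∀ p ∈ l, ordCompl[2] p = m ∧ c ≤ p := fun p hp =>
    (Multiset.mem_filter.1 (hlM ▸ Multiset.mem_coe.2 hp :)).2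
  have hMnodup : M.parts.Nodup := (Finset.mem_filter.1 hM).2
  have hsorted : l.SortedLT := (hl ▸ (Multiset.pairwise_sort _ _).sortedLE).sortedLT_of_nodup
    (Multiset.coe_nodup.1 (hlM ▸ hMnodup.filter _))
  obtain ⟨q, hq⟩ := Multiset.exists_sum_filter_ordCompl_div_eq hm
    fun p hp => hothers p (Multiset.mem_toFinset.2 hp)
  have hsum : l.sum = (f + 2 * q) * c := by
    rw [← Multiset.sum_coe, hlM,
      Multiset.sum_filter_ordCompl_and_le_eq_div_mul hm0 (hMnodup.filter _), hmerge m hm, hq,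
      hcount]
  exact hsorted.even_sub_sum_take_div_and_bounds hm0 hmem hf hh1 hh2 hsum hlow hhigh
end
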